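/- arXiv:1709.00564 — 3 statements merged into one kernel-verified Lean document; each statement's English description precedes it below -/
import Mathlib

section
/- Let T be a woven based matrix over an abelian group H, and suppose T_2 is obtained from T by applying an elementary extension M_i followed by an inverse elementary extension M_j^{-1}, where i,j ∈ {1,2,3,4}. Then T_2 can also be obtained from T by a sequence in which all inverse extensions apply before extensions: namely, by a single elementary extension, by a single inverse elementary extension, by an inverse elementary extension followed by an elementary extension, or by an isomorphism of woven based matrices. -/
universe u v

/-- A woven based matrix over an abelian group `H`: parts `G 1, …, G n` with base
elements `s i ∈ G i`, a weaving set `I`, and a skew-symmetric pairing `b` which is a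
weaving map on `(G ∪ I) × I`. -/
structure WovenBasedMatrix (α : Type u) (H : Type v) [DecidableEq α] [AddCommGroup H]
    (n : ℕ) where
  G : Fin n → Finset α
  I : Finset α
  s : Fin n → α
  b : α → α → H
  s_mem : ∀ i, s i ∈ G i
  disjointG : ∀ i j, i ≠ j → Disjoint (G i) (G j)
  disjointI : ∀ i, Disjoint (G i) I
  skew : ∀ a ∈ Finset.univ.biUnion G ∪ I, ∀ a' ∈ Finset.univ.biUnion G ∪ I,
    b a a' = - b a' a
  diag : ∀ a ∈ Finset.univ.biUnion G ∪ I, b a a = 0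
  inter_zero : ∀ x ∈ I, ∀ y ∈ I, b x y = 0
  weave_two : ∀ x ∈ I, ∃ i j : Fin n, i ≠ j ∧ b (s i) x ≠ 0 ∧ b (s j) x ≠ 0 ∧
    b (s i) x = - b (s j) x ∧ ∀ k : Fin n, b (s k) x ≠ 0 → k = i ∨ k = j
  weave_val : ∀ i : Fin n, ∀ g ∈ G i, ∀ x ∈ I, b g x = 0 ∨ b g x = b (s i) x

variable {α : Type u} {H : Type v} [DecidableEq α] [AddCommGroup H] {n : ℕ}

/-- The underlying set `G ∪ I` of a woven based matrix. -/
def WovenBasedMatrix.carrier (T : WovenBasedMatrix α H n) : Finset α :=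
  Finset.univ.biUnion T.G ∪ T.I

/-- The effect of the intersection move `I_□(g; x₁, x₂)` on the skew-symmetric map `b`,
where `sj` is the base element of the part containing `g`:
`b' g xₖ = b sj xₖ - b g xₖ` for `k = 1,2` (and symmetrically), `b' = b` elsewhere. -/
def IMap (b : α → α → H) (sj g x1 x2 : α) : α → α → H := fun a a' =>
  if a = g ∧ (a' = x1 ∨ a' = x2) then b sj a' - b a a'
  else if a' = g ∧ (a = x1 ∨ a = x2) then b a sj - b a a'
  else b a a'

/-- `x₁, x₂` are a `g`-annihilating pair (with `sj` the base element of `g`'s part). -/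
def IsGAnn (b : α → α → H) (sj g x1 x2 : α) : Prop :=
  b g x1 + b g x2 = 0 ∧ b sj x1 + b sj x2 = 0

/-- `x₁, x₂` are a `g`-unequal pair (with `sj` the base element of `g`'s part). -/
def IsGUnequal (b : α → α → H) (sj g x1 x2 : α) : Prop :=
  b g x1 ≠ b g x2 ∧ b sj x1 = b sj x2

/-- `MoveApplicable k b sj g x1 x2`: the intersection move `I_{k+1}(g;x₁,x₂)` is applicable to
the matrix `b`.  Here `k = 0` encodes the move `I₁` (needing a `g`-annihilating pair) and
`k = 1` encodes the move `I₂` (needing a `g`-unequal pair). -/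
def MoveApplicable (k : Fin 2) (b : α → α → H) (sj g x1 x2 : α) : Prop :=
  if k = 0 then IsGAnn b sj g x1 x2 else IsGUnequal b sj g x1 x2

/-- The data of an intersection move `I_{sq+1}(g; x₁, x₂)` with `g` in the part `G j`. -/
structure MoveDatum (α : Type u) (n : ℕ) where
  j : Fin n
  sq : Fin 2
  g : α
  x1 : α
  x2 : α

/-- The move datum refers to an element `g ∈ G j \ {s j}` and a pair of distinct
elements of the weaving set `I`. -/
def MoveDatum.valid (m : MoveDatum α n) (T : WovenBasedMatrix α H n) : Prop :=
  m.g ∈ T.G m.j ∧ m.g ≠ T.s m.j ∧ m.x1 ∈ T.I ∧ m.x2 ∈ T.I ∧ m.x1 ≠ m.x2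

/-- Apply a finite sequence of intersection moves (listed in order of application)
to the skew-symmetric map `b`. -/
def applyMoves (s : Fin n → α) : List (MoveDatum α n) → (α → α → H) → (α → α → H)
  | [], b => b
  | m :: ms, b => applyMoves s ms (IMap b (s m.j) m.g m.x1 m.x2)

/-- A finite sequence of intersection moves is applicable to `b`: each move in turn is
applicable to the result of the previous ones. -/
def movesApplicable (s : Fin n → α) : List (MoveDatum α n) → (α → α → H) → Prop
  | [], _ => True
  | m :: ms, b => MoveApplicable m.sq b (s m.j) m.g m.x1 m.x2 ∧
      movesApplicable s ms (IMap b (s m.j) m.g m.x1 m.x2)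

/-- A sequence of intersection moves is reduced if it splits into consecutive blocks,
each block acting on a single element `g` of `G`, with pairwise distinct elements `g`
across blocks, and within each block every element of the weaving set appears in at
most one move. -/
def ReducedMoves (L : List (MoveDatum α n)) : Prop :=
  ∃ Bs : List (List (MoveDatum α n)),
    L = Bs.flatten ∧
    (∀ B ∈ Bs, ∀ m ∈ B, ∀ m' ∈ B, m.g = m'.g) ∧
    Bs.Pairwise (fun B B' => ∀ m ∈ B, ∀ m' ∈ B', m.g ≠ m'.g) ∧
    (∀ B ∈ Bs, ∀ x : α, (B.countP fun m => decide (m.x1 = x ∨ m.x2 = x)) ≤ 1)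

/-- `M_{1,j}`: elementary extension adding a `G j`-annihilating element `g`. -/
def ExtRel1 (T T' : WovenBasedMatrix α H n) : Prop :=
  ∃ (j : Fin n) (g : α), g ∉ T.carrier ∧
    T'.s = T.s ∧ T'.I = T.I ∧ T'.G j = insert g (T.G j) ∧
    (∀ i : Fin n, i ≠ j → T'.G i = T.G i) ∧
    (∀ a ∈ T.carrier, ∀ a' ∈ T.carrier, T'.b a a' = T.b a a') ∧
    (∀ a ∈ T'.carrier, T'.b g a = 0)

/-- `M_{2,j}`: elementary extension adding a `G j`-core element `g`. -/
def ExtRel2 (T T' : WovenBasedMatrix α H n) : Prop :=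
  ∃ (j : Fin n) (g : α), g ∉ T.carrier ∧
    T'.s = T.s ∧ T'.I = T.I ∧ T'.G j = insert g (T.G j) ∧
    (∀ i : Fin n, i ≠ j → T'.G i = T.G i) ∧
    (∀ a ∈ T.carrier, ∀ a' ∈ T.carrier, T'.b a a' = T.b a a') ∧
    (∀ a ∈ T'.carrier, T'.b g a = T'.b (T'.s j) a)

/-- `M_{3,j}`: elementary extension adding a `G j`-complementary pair `g₁, g₂`. -/
def ExtRel3 (T T' : WovenBasedMatrix α H n) : Prop :=
  ∃ (j : Fin n) (g1 g2 : α), g1 ≠ g2 ∧ g1 ∉ T.carrier ∧ g2 ∉ T.carrier ∧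
    T'.s = T.s ∧ T'.I = T.I ∧ T'.G j = insert g1 (insert g2 (T.G j)) ∧
    (∀ i : Fin n, i ≠ j → T'.G i = T.G i) ∧
    (∀ a ∈ T.carrier, ∀ a' ∈ T.carrier, T'.b a a' = T.b a a') ∧
    (∀ a ∈ T'.carrier, T'.b g1 a + T'.b g2 a = T'.b (T'.s j) a)

/-- `M₄`: elementary extension adding a sum-annihilating pair `x₁, x₂` to the
weaving set. -/
def ExtRel4 (T T' : WovenBasedMatrix α H n) : Prop :=
  ∃ (x1 x2 : α), x1 ≠ x2 ∧ x1 ∉ T.carrier ∧ x2 ∉ T.carrier ∧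
    T'.s = T.s ∧ T'.G = T.G ∧ T'.I = insert x1 (insert x2 T.I) ∧
    (∀ a ∈ T.carrier, ∀ a' ∈ T.carrier, T'.b a a' = T.b a a') ∧
    (∀ a ∈ T'.carrier, T'.b x1 a + T'.b x2 a = 0)

/-- `T'` is obtained from `T` by a single elementary extension; the inverse elementary
extensions are given by the reversed relation. -/
def ExtRel (T T' : WovenBasedMatrix α H n) : Prop :=
  ExtRel1 T T' ∨ ExtRel2 T T' ∨ ExtRel3 T T' ∨ ExtRel4 T T'

/-- `T'` is obtained from `T` by the elementary extension `M_k` (`k ∈ {1,2,3,4}`). -/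
def ExtRelAt (k : ℕ) (T T' : WovenBasedMatrix α H n) : Prop :=
  match k with
  | 1 => ExtRel1 T T'
  | 2 => ExtRel2 T T'
  | 3 => ExtRel3 T T'
  | 4 => ExtRel4 T T'
  | _ => False

/-- Isomorphism of woven based matrices: a bijection of the underlying sets together with
a permutation of the indices, matching base elements, parts, weaving sets and pairings. -/
def IsoRel (T T' : WovenBasedMatrix α H n) : Prop :=
  ∃ (Φ : α → α) (σ : Equiv.Perm (Fin n)),
    Set.BijOn Φ ↑T.carrier ↑T'.carrier ∧
    (∀ i, Φ (T.s i) = T'.s (σ i)) ∧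
    (∀ i, (T.G i).image Φ = T'.G (σ i)) ∧
    T.I.image Φ = T'.I ∧
    (∀ a ∈ T.carrier, ∀ a' ∈ T.carrier, T'.b (Φ a) (Φ a') = T.b a a')

/-- `T'` is obtained from `T` by a single intersection move. -/
def IMoveRel (T T' : WovenBasedMatrix α H n) : Prop :=
  ∃ m : MoveDatum α n, m.valid T ∧
    MoveApplicable m.sq T.b (T.s m.j) m.g m.x1 m.x2 ∧
    T'.G = T.G ∧ T'.I = T.I ∧ T'.s = T.s ∧
    (∀ a ∈ T.carrier, ∀ a' ∈ T.carrier,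
      T'.b a a' = IMap T.b (T.s m.j) m.g m.x1 m.x2 a a')

/-- `T` and `T'` are equal woven based matrices (same parts, base elements, weaving set
and the same pairing on the underlying set). -/
def WBMEq (T T' : WovenBasedMatrix α H n) : Prop :=
  T'.G = T.G ∧ T'.I = T.I ∧ T'.s = T.s ∧
  ∀ a ∈ T.carrier, ∀ a' ∈ T.carrier, T'.b a a' = T.b a a'

/-- One step of the homology relation: an elementary extension, an inverse elementary
extension, an intersection move, or an isomorphism. -/
def HomStep (T T' : WovenBasedMatrix α H n) : Prop :=
  ExtRel T T' ∨ ExtRel T' T ∨ IMoveRel T T' ∨ IsoRel T T'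

/-- Two woven based matrices are homologous if they are related by a finite sequence of
elementary extensions and their inverses, intersection moves, and isomorphisms. -/
def Homologous : WovenBasedMatrix α H n → WovenBasedMatrix α H n → Prop :=
  Relation.ReflTransGen HomStep

/-- No inverse elementary extension applies to `T`: there is no `G i`-annihilating
element, no `G i`-core element, no `G i`-complementary pair, and no sum-annihilating
pair in the weaving set. -/
def NoInverseExtension (T : WovenBasedMatrix α H n) : Prop :=
  (∀ i : Fin n, ∀ g ∈ T.G i, g ≠ T.s i → ¬ (∀ a ∈ T.carrier, T.b g a = 0)) ∧
  (∀ i : Fin n, ∀ g ∈ T.G i, g ≠ T.s i →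
    ¬ (∀ a ∈ T.carrier, T.b g a = T.b (T.s i) a)) ∧
  (∀ i : Fin n, ∀ g1 ∈ T.G i, ∀ g2 ∈ T.G i, g1 ≠ T.s i → g2 ≠ T.s i → g1 ≠ g2 →
    ¬ (∀ a ∈ T.carrier, T.b g1 a + T.b g2 a = T.b (T.s i) a)) ∧
  (∀ x1 ∈ T.I, ∀ x2 ∈ T.I, x1 ≠ x2 → ¬ (∀ a ∈ T.carrier, T.b x1 a + T.b x2 a = 0))

/-- A woven based matrix is primitive if after every finite sequence of intersection
moves, no inverse elementary extension can be applied. -/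
def Primitive (T : WovenBasedMatrix α H n) : Prop :=
  ∀ T' : WovenBasedMatrix α H n, Relation.ReflTransGen IMoveRel T T' →
    NoInverseExtension T'


/-
An elementary extension `T → T₁` says exactly that `T` is `T₁` with a removable set `S`
deleted: a single annihilating or core element, or a complementary or sum-annihilating
pair. So `T` and `T₂` come from `T₁` by deleting removable sets `S` and `S'`. If these are
disjoint, each stays removable after deleting the other, and deleting `S ∪ S'` from `T₁`
gives a common `T₃`. Otherwise they share an element `c`; if `S = S'`, then `T` and `T₂`
agree. If `c` is removable alone and `{d, c}` is a pair, then `d` is removable alone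
(annihilating and core swap roles), so one of `T`, `T₂` is an elementary extension of the
other. If `{p, c}` and `{d, c}` are both pairs, then `p` and `d` pair identically with
everything, and their transposition maps `T` onto `T₂`.
-/

lemma Finset.image_swap_sdiff_insert {F R : Finset α} {p d : α} (hF : p ∈ F ↔ d ∈ F)
    (hp : p ∉ R) (hd : d ∉ R) :
    (F \ insert p R).image (Equiv.swap p d) = F \ insert d R := by
  ext a
  simp only [Finset.mem_image, Finset.mem_sdiff, Finset.mem_insert]
  constructor
  · rintro ⟨b, hb, rfl⟩
    rw [Equiv.swap_apply_def]
    split_ifs <;> grind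
  · intro ha
    refine ⟨Equiv.swap p d a, ?_, Equiv.swap_apply_self _ _ _⟩
    rw [Equiv.swap_apply_def]
    split_ifs <;> grind

namespace WovenBasedMatrix

variable {T T1 T2 T' : WovenBasedMatrix α H n} {S R : Finset α} {a c d g p x y : α}
  {i j : Fin n}

lemma mem_carrier : a ∈ T.carrier ↔ (∃ i, a ∈ T.G i) ∨ a ∈ T.I := by
  simp [carrier]

lemma G_subset_carrier (T : WovenBasedMatrix α H n) (i : Fin n) : T.G i ⊆ T.carrier :=
  fun _ ha => mem_carrier.mpr (Or.inl ⟨i, ha⟩)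

lemma I_subset_carrier (T : WovenBasedMatrix α H n) : T.I ⊆ T.carrier :=
  fun _ ha => mem_carrier.mpr (Or.inr ha)

lemma s_mem_carrier (T : WovenBasedMatrix α H n) (i : Fin n) : T.s i ∈ T.carrier :=
  T.G_subset_carrier i (T.s_mem i)

lemma mem_G_iff_of_mem_G (hg : g ∈ T.G j) : g ∈ T.G i ↔ i = j := by
  refine ⟨fun hgi => ?_, fun hij => hij ▸ hg⟩
  by_contra hij
  exact Finset.disjoint_left.mp (T.disjointG i j hij) hgi hg

lemma notMem_I_of_mem_G (hg : g ∈ T.G j) : g ∉ T.I :=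
  Finset.disjoint_left.mp (T.disjointI j) hg

lemma notMem_G_of_mem_I (hx : x ∈ T.I) : x ∉ T.G i :=
  fun hg => notMem_I_of_mem_G hg hx

structure IsDeletion (T T1 : WovenBasedMatrix α H n) (S : Finset α) : Prop where
  s_eq : T.s = T1.s
  G_eq : ∀ i, T.G i = T1.G i \ S
  I_eq : T.I = T1.I \ S
  b_eq : ∀ a ∈ T.carrier, ∀ a' ∈ T.carrier, T.b a a' = T1.b a a'

namespace IsDeletion

lemma carrier_eq (h : T.IsDeletion T1 S) : T.carrier = T1.carrier \ S := by
  ext a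
  simp only [mem_carrier, h.G_eq, h.I_eq, Finset.mem_sdiff, exists_and_right, or_and_right]

lemma mem_carrier_iff (h : T.IsDeletion T1 S) :
    a ∈ T.carrier ↔ a ∈ T1.carrier ∧ a ∉ S := by
  rw [h.carrier_eq, Finset.mem_sdiff]

lemma s_notMem (h : T.IsDeletion T1 S) (i : Fin n) : T1.s i ∉ S := by
  have hs := T.s_mem i
  rw [h.G_eq, h.s_eq, Finset.mem_sdiff] at hs
  exact hs.2

lemma b_eq_of_mem (h : T.IsDeletion T1 S) (hg : g ∈ T1.carrier) (hgS : g ∉ S)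
    (ha : a ∈ T.carrier) : T.b g a = T1.b g a :=
  h.b_eq g (h.mem_carrier_iff.mpr ⟨hg, hgS⟩) a ha

lemma b_s_eq (h : T.IsDeletion T1 S) (j : Fin n) (ha : a ∈ T.carrier) :
    T.b (T.s j) a = T1.b (T1.s j) a := by
  rw [h.b_eq _ (T.s_mem_carrier j) a ha, h.s_eq]

lemma of_union (h : T'.IsDeletion T1 (R ∪ S)) (hT : T.IsDeletion T1 S) : T'.IsDeletion T R where
  s_eq := h.s_eq.trans hT.s_eq.symm
  G_eq i := by rw [h.G_eq, hT.G_eq, sdiff_sdiff_left, Finset.sup_eq_union, Finset.union_comm]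
  I_eq := by rw [h.I_eq, hT.I_eq, sdiff_sdiff_left, Finset.sup_eq_union, Finset.union_comm]
  b_eq a ha a' ha' := by
    have hsub : T'.carrier ⊆ T.carrier := by
      rw [h.carrier_eq, hT.carrier_eq]
      exact Finset.sdiff_subset_sdiff subset_rfl Finset.subset_union_right
    rw [h.b_eq a ha a' ha', hT.b_eq a (hsub ha) a' (hsub ha')]

end IsDeletion

def erase (T : WovenBasedMatrix α H n) (S : Finset α) (hS : ∀ i, T.s i ∉ S) :
    WovenBasedMatrix α H n :=
  have hsub : Finset.univ.biUnion (fun i => T.G i \ S) ∪ T.I \ S ⊆ T.carrier :=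
    Finset.union_subset_union (Finset.biUnion_mono fun _ _ => Finset.sdiff_subset)
      Finset.sdiff_subset
  { G := fun i => T.G i \ S
    I := T.I \ S
    s := T.s
    b := T.b
    s_mem := fun i => Finset.mem_sdiff.mpr ⟨T.s_mem i, hS i⟩
    disjointG := fun i j hij => (T.disjointG i j hij).mono Finset.sdiff_subset Finset.sdiff_subset
    disjointI := fun i => (T.disjointI i).mono Finset.sdiff_subset Finset.sdiff_subset
    skew := fun a ha a' ha' => T.skew a (hsub ha) a' (hsub ha')
    diag := fun a ha => T.diag a (hsub ha)
    inter_zero := fun x hx y hy =>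
      T.inter_zero x (Finset.sdiff_subset hx) y (Finset.sdiff_subset hy)
    weave_two := fun x hx => T.weave_two x (Finset.sdiff_subset hx)
    weave_val := fun i g hg x hx =>
      T.weave_val i g (Finset.sdiff_subset hg) x (Finset.sdiff_subset hx) }

lemma isDeletion_erase (T : WovenBasedMatrix α H n) (hS : ∀ i, T.s i ∉ S) :
    (T.erase S hS).IsDeletion T S :=
  ⟨rfl, fun _ => rfl, rfl, fun _ _ _ _ => rfl⟩

lemma isDeletion_iff_of_subset_G (hS : S ⊆ T'.G j) :
    T.IsDeletion T' S ↔ (∀ x ∈ S, x ∉ T.carrier) ∧ T'.s = T.s ∧ T'.I = T.I ∧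
      T'.G j = S ∪ T.G j ∧ (∀ i, i ≠ j → T'.G i = T.G i) ∧
      ∀ a ∈ T.carrier, ∀ a' ∈ T.carrier, T'.b a a' = T.b a a' := by
  constructor
  · intro h
    refine ⟨fun x hx hxT => (h.mem_carrier_iff.mp hxT).2 hx, h.s_eq.symm, ?_, ?_,
      fun i hij => ?_, fun a ha a' ha' => (h.b_eq a ha a' ha').symm⟩
    · rw [h.I_eq, Finset.sdiff_eq_self_of_disjoint ((T'.disjointI j).mono_left hS).symm]
    · rw [h.G_eq, Finset.union_sdiff_of_subset hS]
    · rw [h.G_eq, Finset.sdiff_eq_self_of_disjoint ((T'.disjointG i j hij).mono_right hS)]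
  · rintro ⟨hfresh, hs, hI, hGj, hGi, hb⟩
    have hST : Disjoint S T.carrier := Finset.disjoint_left.mpr hfresh
    refine ⟨hs.symm, fun i => ?_, ?_, fun a ha a' ha' => (hb a ha a' ha').symm⟩
    · by_cases hij : i = j
      · rw [hij, hGj, Finset.union_sdiff_cancel_left (hST.mono_right (T.G_subset_carrier j))]
      · rw [hGi i hij,
          Finset.sdiff_eq_self_of_disjoint (hST.mono_right (T.G_subset_carrier i)).symm]
    · rw [hI, Finset.sdiff_eq_self_of_disjoint (hST.mono_right T.I_subset_carrier).symm]

lemma isDeletion_iff_of_subset_I (hS : S ⊆ T'.I) :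
    T.IsDeletion T' S ↔ (∀ x ∈ S, x ∉ T.carrier) ∧ T'.s = T.s ∧ T'.G = T.G ∧
      T'.I = S ∪ T.I ∧ ∀ a ∈ T.carrier, ∀ a' ∈ T.carrier, T'.b a a' = T.b a a' := by
  constructor
  · intro h
    refine ⟨fun x hx hxT => (h.mem_carrier_iff.mp hxT).2 hx, h.s_eq.symm, funext fun i => ?_,
      ?_, fun a ha a' ha' => (h.b_eq a ha a' ha').symm⟩
    · rw [h.G_eq, Finset.sdiff_eq_self_of_disjoint ((T'.disjointI i).mono_right hS)]
    · rw [h.I_eq, Finset.union_sdiff_of_subset hS]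
  · rintro ⟨hfresh, hs, hG, hI, hb⟩
    have hST : Disjoint S T.carrier := Finset.disjoint_left.mpr hfresh
    refine ⟨hs.symm, fun i => ?_, ?_, fun a ha a' ha' => (hb a ha a' ha').symm⟩
    · rw [hG, Finset.sdiff_eq_self_of_disjoint (hST.mono_right (T.G_subset_carrier i)).symm]
    · rw [hI, Finset.union_sdiff_cancel_left (hST.mono_right T.I_subset_carrier)]

def IsRemovableElement (T : WovenBasedMatrix α H n) (j : Fin n) (g : α) : Prop :=
  g ∈ T.G j ∧
    ((∀ a ∈ T.carrier, T.b g a = 0) ∨ ∀ a ∈ T.carrier, T.b g a = T.b (T.s j) a)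

def IsRemovablePair (T : WovenBasedMatrix α H n) (x y : α) : Prop :=
  (∃ j, x ∈ T.G j ∧ y ∈ T.G j ∧
      ∀ a ∈ T.carrier, T.b x a + T.b y a = T.b (T.s j) a) ∨
    (x ∈ T.I ∧ y ∈ T.I ∧ ∀ a ∈ T.carrier, T.b x a + T.b y a = 0)

/-- Unlike in the paper, removable elements need not differ from the base elements: a
deletion keeping every `s i` forces this. -/
def Removable (T : WovenBasedMatrix α H n) (S : Finset α) : Prop :=
  (∃ j g, S = {g} ∧ T.IsRemovableElement j g) ∨
    ∃ x y, x ≠ y ∧ S = {x, y} ∧ T.IsRemovablePair x y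

lemma IsRemovablePair.symm (h : T.IsRemovablePair x y) : T.IsRemovablePair y x := by
  rcases h with ⟨j, hx, hy, hsum⟩ | ⟨hx, hy, hsum⟩
  · exact Or.inl ⟨j, hy, hx, fun a ha => by rw [add_comm, hsum a ha]⟩
  · exact Or.inr ⟨hy, hx, fun a ha => by rw [add_comm, hsum a ha]⟩

lemma Removable.eq_singleton_or_eq_pair (h : T.Removable S) (hc : c ∈ S) :
    (S = {c} ∧ ∃ j, T.IsRemovableElement j c) ∨
      ∃ p, p ≠ c ∧ S = {p, c} ∧ T.IsRemovablePair p c := by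
  rcases h with ⟨j, g, rfl, hg⟩ | ⟨x, y, hxy, rfl, hpair⟩
  · obtain rfl := Finset.mem_singleton.mp hc
    exact Or.inl ⟨rfl, j, hg⟩
  · rcases Finset.mem_insert.mp hc with rfl | hc
    · exact Or.inr ⟨y, hxy.symm, Finset.pair_comm _ _, hpair.symm⟩
    · obtain rfl := Finset.mem_singleton.mp hc
      exact Or.inr ⟨x, hxy, rfl, hpair⟩

lemma IsRemovableElement.of_isDeletion (hg : T1.IsRemovableElement j g)
    (h : T.IsDeletion T1 S) (hgS : g ∉ S) : T.IsRemovableElement j g := by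
  obtain ⟨hgG, hgb⟩ := hg
  have hg1 := T1.G_subset_carrier j hgG
  have hsub : ∀ a ∈ T.carrier, a ∈ T1.carrier := fun a ha => (h.mem_carrier_iff.mp ha).1
  refine ⟨by rw [h.G_eq]; exact Finset.mem_sdiff.mpr ⟨hgG, hgS⟩,
    hgb.imp (fun hann a ha => ?_) (fun hcore a ha => ?_)⟩
  · rw [h.b_eq_of_mem hg1 hgS ha, hann a (hsub a ha)]
  · rw [h.b_eq_of_mem hg1 hgS ha, h.b_s_eq j ha, hcore a (hsub a ha)]

lemma IsRemovablePair.of_isDeletion (hxy : T1.IsRemovablePair x y) (h : T.IsDeletion T1 S)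
    (hxS : x ∉ S) (hyS : y ∉ S) : T.IsRemovablePair x y := by
  have hsub : ∀ a ∈ T.carrier, a ∈ T1.carrier := fun a ha => (h.mem_carrier_iff.mp ha).1
  rcases hxy with ⟨j, hx, hy, hsum⟩ | ⟨hx, hy, hsum⟩
  · refine Or.inl ⟨j, ?_, ?_, fun a ha => ?_⟩
    · rw [h.G_eq]; exact Finset.mem_sdiff.mpr ⟨hx, hxS⟩
    · rw [h.G_eq]; exact Finset.mem_sdiff.mpr ⟨hy, hyS⟩
    · rw [h.b_eq_of_mem (T1.G_subset_carrier j hx) hxS ha,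
        h.b_eq_of_mem (T1.G_subset_carrier j hy) hyS ha, h.b_s_eq j ha, hsum a (hsub a ha)]
  · refine Or.inr ⟨?_, ?_, fun a ha => ?_⟩
    · rw [h.I_eq]; exact Finset.mem_sdiff.mpr ⟨hx, hxS⟩
    · rw [h.I_eq]; exact Finset.mem_sdiff.mpr ⟨hy, hyS⟩
    · rw [h.b_eq_of_mem (T1.I_subset_carrier hx) hxS ha,
        h.b_eq_of_mem (T1.I_subset_carrier hy) hyS ha, hsum a (hsub a ha)]

lemma Removable.of_isDeletion (hR : T1.Removable R) (h : T.IsDeletion T1 S)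
    (hRS : Disjoint R S) : T.Removable R := by
  have hnot : ∀ x ∈ R, x ∉ S := fun x hx => Finset.disjoint_left.mp hRS hx
  rcases hR with ⟨j, g, rfl, hg⟩ | ⟨x, y, hxy, rfl, hpair⟩
  · exact Or.inl ⟨j, g, rfl, hg.of_isDeletion h (hnot g (Finset.mem_singleton_self g))⟩
  · exact Or.inr ⟨x, y, hxy, rfl, hpair.of_isDeletion h (hnot x (by simp)) (hnot y (by simp))⟩

lemma IsRemovablePair.isRemovableElement_left (h : T.IsRemovablePair d c)
    (hc : T.IsRemovableElement j c) : T.IsRemovableElement j d := by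
  obtain ⟨hcG, hcb⟩ := hc
  rcases h with ⟨j', hd, hc', hsum⟩ | ⟨-, hcI, -⟩
  · obtain rfl := (mem_G_iff_of_mem_G hcG).mp hc'
    refine ⟨hd, hcb.symm.imp (fun hcore a ha => ?_) (fun hann a ha => ?_)⟩
    · exact add_eq_right.mp ((hsum a ha).trans (hcore a ha).symm)
    · rw [← hsum a ha, hann a ha, add_zero]
  · exact absurd hcI (notMem_I_of_mem_G hcG)

structure AreTwins (T : WovenBasedMatrix α H n) (p d : α) : Prop where
  mem_G_iff : ∀ i, p ∈ T.G i ↔ d ∈ T.G i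
  mem_I_iff : p ∈ T.I ↔ d ∈ T.I
  b_eq : ∀ a ∈ T.carrier, T.b p a = T.b d a

lemma IsRemovablePair.areTwins (h : T.IsRemovablePair p c) (h' : T.IsRemovablePair d c) :
    T.AreTwins p d := by
  rcases h with ⟨j, hp, hc, hsum⟩ | ⟨hp, hc, hsum⟩ <;>
    rcases h' with ⟨j', hd, hc', hsum'⟩ | ⟨hd, hc', hsum'⟩
  · obtain rfl := (mem_G_iff_of_mem_G hc).mp hc'
    refine ⟨fun i => by rw [mem_G_iff_of_mem_G hp, mem_G_iff_of_mem_G hd],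
      iff_of_false (notMem_I_of_mem_G hp) (notMem_I_of_mem_G hd), fun a ha => ?_⟩
    exact add_right_cancel ((hsum a ha).trans (hsum' a ha).symm)
  · exact absurd hc' (notMem_I_of_mem_G hc)
  · exact absurd hc (notMem_I_of_mem_G hc')
  · refine ⟨fun i => iff_of_false (notMem_G_of_mem_I hp) (notMem_G_of_mem_I hd),
      iff_of_true hp hd, fun a ha => ?_⟩
    exact add_right_cancel ((hsum a ha).trans (hsum' a ha).symm)

namespace AreTwins

lemma refl (T : WovenBasedMatrix α H n) (p : α) : T.AreTwins p p :=
  ⟨fun _ => Iff.rfl, Iff.rfl, fun _ _ => rfl⟩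

lemma mem_carrier_iff (h : T.AreTwins p d) : p ∈ T.carrier ↔ d ∈ T.carrier := by
  simp only [mem_carrier, h.mem_G_iff, h.mem_I_iff]

lemma swap_mem_carrier (h : T.AreTwins p d) (ha : a ∈ T.carrier) :
    Equiv.swap p d a ∈ T.carrier := by
  rw [Equiv.swap_apply_def]
  split_ifs with hap had
  · exact h.mem_carrier_iff.mp (hap ▸ ha)
  · exact h.mem_carrier_iff.mpr (had ▸ ha)
  · exact ha

lemma b_swap_left (h : T.AreTwins p d) {a' : α} (ha' : a' ∈ T.carrier) :
    T.b (Equiv.swap p d a) a' = T.b a a' := by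
  rw [Equiv.swap_apply_def]
  split_ifs with hap had
  · rw [hap, h.b_eq a' ha']
  · rw [had, h.b_eq a' ha']
  · rfl

lemma b_swap (h : T.AreTwins p d) (ha : a ∈ T.carrier) {a' : α} (ha' : a' ∈ T.carrier) :
    T.b (Equiv.swap p d a) (Equiv.swap p d a') = T.b a a' := by
  have ha'' := h.swap_mem_carrier ha'
  rw [h.b_swap_left ha'', T.skew a ha _ ha'', h.b_swap_left ha, ← T.skew a ha a' ha']

lemma isoRel (h : T1.AreTwins p d) (hT : T.IsDeletion T1 (insert p R))
    (hT2 : T2.IsDeletion T1 (insert d R)) (hp : p ∉ R) (hd : d ∉ R) : IsoRel T T2 := by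
  have hcarrier : T.carrier.image (Equiv.swap p d) = T2.carrier := by
    rw [hT.carrier_eq, hT2.carrier_eq,
      Finset.image_swap_sdiff_insert h.mem_carrier_iff hp hd]
  refine ⟨Equiv.swap p d, Equiv.refl _, ?_, fun i => ?_, fun i => ?_, ?_, fun a ha a' ha' => ?_⟩
  · rw [← hcarrier, Finset.coe_image]
    exact (Equiv.injective _).injOn.bijOn_image
  · have hsp : T1.s i ≠ p := fun hs => hT.s_notMem i (hs ▸ Finset.mem_insert_self p R)
    have hsd : T1.s i ≠ d := fun hs => hT2.s_notMem i (hs ▸ Finset.mem_insert_self d R)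
    rw [hT.s_eq, hT2.s_eq, Equiv.swap_apply_of_ne_of_ne hsp hsd]
    rfl
  · rw [hT.G_eq, hT2.G_eq, Finset.image_swap_sdiff_insert (h.mem_G_iff i) hp hd]
    rfl
  · rw [hT.I_eq, hT2.I_eq, Finset.image_swap_sdiff_insert h.mem_I_iff hp hd]
  · have hmem : ∀ a ∈ T.carrier, Equiv.swap p d a ∈ T2.carrier := fun a ha =>
      hcarrier ▸ Finset.mem_image_of_mem _ ha
    have hsub : ∀ a ∈ T.carrier, a ∈ T1.carrier := fun a ha => (hT.mem_carrier_iff.mp ha).1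
    rw [hT2.b_eq _ (hmem a ha) _ (hmem a' ha'), h.b_swap (hsub a ha) (hsub a' ha'),
      hT.b_eq a ha a' ha']

end AreTwins

lemma IsDeletion.extRel (h : T.IsDeletion T' S) (hS : T'.Removable S) : ExtRel T T' := by
  rcases hS with ⟨j, g, rfl, hgG, hann | hcore⟩ |
      ⟨x, y, hxy, rfl, ⟨j, hxG, hyG, hsum⟩ | ⟨hxI, hyI, hsum⟩⟩
  · obtain ⟨hfresh, hs, hI, hGj, hGi, hb⟩ :=
      (isDeletion_iff_of_subset_G (Finset.singleton_subset_iff.mpr hgG)).mp h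
    exact Or.inl ⟨j, g, by simpa using hfresh, hs, hI, by rwa [← Finset.singleton_union],
      hGi, hb, hann⟩
  · obtain ⟨hfresh, hs, hI, hGj, hGi, hb⟩ :=
      (isDeletion_iff_of_subset_G (Finset.singleton_subset_iff.mpr hgG)).mp h
    exact Or.inr (Or.inl ⟨j, g, by simpa using hfresh, hs, hI,
      by rwa [← Finset.singleton_union], hGi, hb, hcore⟩)
  · obtain ⟨hfresh, hs, hI, hGj, hGi, hb⟩ :=
      (isDeletion_iff_of_subset_G (Finset.insert_subset hxG (by simpa using hyG))).mp h
    exact Or.inr (Or.inr (Or.inl ⟨j, x, y, hxy, hfresh x (by simp), hfresh y (by simp), hs,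
      hI, by rwa [Finset.insert_union, Finset.singleton_union] at hGj, hGi, hb, hsum⟩))
  · obtain ⟨hfresh, hs, hG, hI, hb⟩ :=
      (isDeletion_iff_of_subset_I (Finset.insert_subset hxI (by simpa using hyI))).mp h
    exact Or.inr (Or.inr (Or.inr ⟨x, y, hxy, hfresh x (by simp), hfresh y (by simp), hs, hG,
      by rwa [Finset.insert_union, Finset.singleton_union] at hI, hb, hsum⟩))

lemma _root_.ExtRel.exists_removable (h : ExtRel T T') :
    ∃ S, T'.Removable S ∧ T.IsDeletion T' S := by
  rcases h with ⟨j, g, hg, hs, hI, hGj, hGi, hb, hann⟩ |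
      ⟨j, g, hg, hs, hI, hGj, hGi, hb, hcore⟩ |
      ⟨j, x, y, hxy, hx, hy, hs, hI, hGj, hGi, hb, hsum⟩ |
      ⟨x, y, hxy, hx, hy, hs, hG, hI, hb, hsum⟩
  · have hgG : g ∈ T'.G j := hGj ▸ Finset.mem_insert_self g _
    refine ⟨{g}, Or.inl ⟨j, g, rfl, hgG, Or.inl hann⟩,
      (isDeletion_iff_of_subset_G (Finset.singleton_subset_iff.mpr hgG)).mpr
        ⟨by simpa using hg, hs, hI, by rwa [Finset.singleton_union], hGi, hb⟩⟩
  · have hgG : g ∈ T'.G j := hGj ▸ Finset.mem_insert_self g _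
    refine ⟨{g}, Or.inl ⟨j, g, rfl, hgG, Or.inr hcore⟩,
      (isDeletion_iff_of_subset_G (Finset.singleton_subset_iff.mpr hgG)).mpr
        ⟨by simpa using hg, hs, hI, by rwa [Finset.singleton_union], hGi, hb⟩⟩
  · have hxG : x ∈ T'.G j := by simp [hGj]
    have hyG : y ∈ T'.G j := by simp [hGj]
    refine ⟨{x, y}, Or.inr ⟨x, y, hxy, rfl, Or.inl ⟨j, hxG, hyG, hsum⟩⟩,
      (isDeletion_iff_of_subset_G (Finset.insert_subset hxG (by simpa using hyG))).mpr
        ⟨by simp [hx, hy], hs, hI, by rwa [Finset.insert_union, Finset.singleton_union],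
          hGi, hb⟩⟩
  · have hxI : x ∈ T'.I := by simp [hI]
    have hyI : y ∈ T'.I := by simp [hI]
    refine ⟨{x, y}, Or.inr ⟨x, y, hxy, rfl, Or.inr ⟨hxI, hyI, hsum⟩⟩,
      (isDeletion_iff_of_subset_I (Finset.insert_subset hxI (by simpa using hyI))).mpr
        ⟨by simp [hx, hy], hs, hG, by rwa [Finset.insert_union, Finset.singleton_union], hb⟩⟩

lemma extRel_of_isDeletion_union
    (hT : T.IsDeletion T1 S) (hT' : T'.IsDeletion T1 (R ∪ S)) (hR : T1.Removable R)
    (hRS : Disjoint R S) : ExtRel T' T :=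
  (hT'.of_union hT).extRel (hR.of_isDeletion hT hRS)

end WovenBasedMatrix

open WovenBasedMatrix in
/-- a composition `M_j⁻¹ ∘ M_i` of an elementary extension followed by an
inverse elementary extension can be replaced by a sequence in which all inverse
extensions apply before extensions: a single extension, a single inverse extension, an
inverse extension followed by an extension, or an isomorphism. -/
theorem extension_inverse_reorder
    {α : Type u} {H : Type v} [DecidableEq α] [AddCommGroup H] {n : ℕ}
    (T T1 T2 : WovenBasedMatrix α H n)
    (h1 : ExtRel T T1) (h2 : ExtRel T2 T1) :
    ExtRel T T2 ∨ ExtRel T2 T ∨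
      (∃ T3 : WovenBasedMatrix α H n, ExtRel T3 T ∧ ExtRel T3 T2) ∨
      IsoRel T T2 := by
  obtain ⟨S, hS, hT⟩ := h1.exists_removable
  obtain ⟨S', hS', hT2⟩ := h2.exists_removable
  by_cases hdisj : Disjoint S S'
  · have hs : ∀ i, T1.s i ∉ S' ∪ S := fun i =>
      Finset.notMem_union.mpr ⟨hT2.s_notMem i, hT.s_notMem i⟩
    have hT3 := T1.isDeletion_erase hs
    refine Or.inr (Or.inr (Or.inl ⟨_, extRel_of_isDeletion_union hT hT3 hS' hdisj.symm,
      extRel_of_isDeletion_union hT2 (Finset.union_comm S' S ▸ hT3) hS hdisj⟩))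
  obtain ⟨c, hcS, hcS'⟩ := Finset.not_disjoint_iff.mp hdisj
  rcases hS.eq_singleton_or_eq_pair hcS with ⟨rfl, j, hc⟩ | ⟨p, hpc, rfl, hpc'⟩ <;>
    rcases hS'.eq_singleton_or_eq_pair hcS' with ⟨rfl, j', hc'⟩ | ⟨d, hdc, rfl, hdc'⟩
  · rw [← Finset.insert_empty] at hT hT2
    exact Or.inr (Or.inr (Or.inr ((AreTwins.refl T1 c).isoRel hT hT2
      (Finset.notMem_empty c) (Finset.notMem_empty c))))
  · rw [Finset.insert_eq] at hT2
    exact Or.inr (Or.inl (extRel_of_isDeletion_union hT hT2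
      (Or.inl ⟨j, d, rfl, hdc'.isRemovableElement_left hc⟩)
      (Finset.disjoint_singleton.mpr hdc)))
  · rw [Finset.insert_eq] at hT
    exact Or.inl (extRel_of_isDeletion_union hT2 hT
      (Or.inl ⟨j', p, rfl, hpc'.isRemovableElement_left hc'⟩)
      (Finset.disjoint_singleton.mpr hpc))
  · exact Or.inr (Or.inr (Or.inr ((hpc'.areTwins hdc').isoRel hT hT2
      (Finset.notMem_singleton.mpr hpc) (Finset.notMem_singleton.mpr hdc))))
end

section
/- Let T be a woven based matrix over an abelian group H, and suppose T_2 is obtained from T by applying an elementary extension M_i, then a finite sequence N of intersection moves, then an inverse elementary extension M_j^{-1}. Then T_2 can be obtained from T by a sequence N_3∘M_j^{-1}∘N_2∘M_i∘N_1 where N_1, N_2, N_3 are finite sequences of intersection moves, N_2 is reduced, and every intersection move in N_2 affects both an element added by M_i and an element removed by M_j^{-1}. Furthermore, if exactly one of i,j equals 4, then N_2 contains at most 2 intersection moves acting on each non-intersection element added by M_i (respectively removed by M_j^{-1}), and if i = j = 4 then N_2 contains at most two moves acting on each element g ∈ G. -/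
universe u v

variable {α : Type u} {H : Type v} [DecidableEq α] [AddCommGroup H] {n : ℕ}

/-!
An intersection move changes only entries `b g x` (and `b x g`) with `g` a non-base element of
some `G j` and `x ∈ I`, replacing `b g x ∈ {0, b (s j) x}` by the other value. Fix such a `g` and
its row `r₀` in `T1`. A move on `g` toggles two entries while preserving the sum of their
differences from `r₀`, so the nonzero differences keep pairing off into pairs with sum zero.
Hence the entries of the row changed by `N` split into pairs on each of which a single move
applies to `T1` itself. These moves have disjoint supports, so they commute and form a reduced
sequence with the effect of `N`. Those not touching the elements added by `M_i` can be made
before `M_i`, those not touching the elements removed by `M_j⁻¹` after it, and the others form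
`N₂`. As the pairs in a row are disjoint and `g ∉ I`, at most two moves of `N₂` act on `g` when
the added (or removed) elements are the two elements of `I` of an `M₄`.
-/

namespace MoveDatum

def Affects (m : MoveDatum α n) (a a' : α) : Prop :=
  a = m.g ∧ (a' = m.x1 ∨ a' = m.x2)

def Disjoint (m m' : MoveDatum α n) : Prop :=
  ∀ a a', m.Affects a a' → ¬ m'.Affects a a'

abbrev Touches (m : MoveDatum α n) (S : Finset α) : Prop :=
  m.g ∈ S ∨ m.x1 ∈ S ∨ m.x2 ∈ S

end MoveDatum

namespace WovenBasedMatrix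

variable {X Y : WovenBasedMatrix α H n}

theorem mem_carrier_of_mem_G {k : Fin n} {a : α} (h : a ∈ X.G k) : a ∈ X.carrier :=
  Finset.mem_union_left _ (Finset.mem_biUnion.2 ⟨k, Finset.mem_univ _, h⟩)

theorem mem_carrier_of_mem_I {a : α} (h : a ∈ X.I) : a ∈ X.carrier :=
  Finset.mem_union_right _ h

theorem notMem_I_of_mem_G_s14 {k : Fin n} {a : α} (h : a ∈ X.G k) : a ∉ X.I :=
  Finset.disjoint_left.1 (X.disjointI k) h

theorem eq_of_mem_G {k k' : Fin n} {a : α} (h : a ∈ X.G k) (h' : a ∈ X.G k') : k = k' := by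
  by_contra hne
  exact Finset.disjoint_left.1 (X.disjointG k k' hne) h h'

theorem base_notMem_I (k : Fin n) : X.s k ∉ X.I :=
  notMem_I_of_mem_G_s14 (X.s_mem k)

structure Subframe (X Y : WovenBasedMatrix α H n) : Prop where
  s_eq : X.s = Y.s
  G_subset : ∀ k, X.G k ⊆ Y.G k
  I_subset : X.I ⊆ Y.I

theorem Subframe.carrier_subset (h : X.Subframe Y) : X.carrier ⊆ Y.carrier :=
  Finset.union_subset_union (Finset.biUnion_mono fun k _ => h.G_subset k) h.I_subset

theorem Subframe.mem_G_of_mem_carrier (h : X.Subframe Y) {k : Fin n} {a : α} (hY : a ∈ Y.G k)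
    (hX : a ∈ X.carrier) : a ∈ X.G k := by
  rcases Finset.mem_union.1 hX with hG | hI
  · obtain ⟨k', -, hk'⟩ := Finset.mem_biUnion.1 hG
    rwa [Y.eq_of_mem_G hY (h.G_subset k' hk')]
  · exact absurd (h.I_subset hI) (notMem_I_of_mem_G_s14 hY)

theorem Subframe.mem_I_of_mem_carrier (h : X.Subframe Y) {a : α} (hY : a ∈ Y.I)
    (hX : a ∈ X.carrier) : a ∈ X.I := by
  rcases Finset.mem_union.1 hX with hG | hI
  · obtain ⟨k, -, hk⟩ := Finset.mem_biUnion.1 hG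
    exact absurd hY (notMem_I_of_mem_G_s14 (h.G_subset k hk))
  · exact hI

theorem carrier_sdiff_subset {W : Finset α} (hG : ∀ k, Y.G k ⊆ W ∪ X.G k) (hI : Y.I ⊆ W ∪ X.I) :
    Y.carrier \ X.carrier ⊆ W := by
  intro a ha
  obtain ⟨ha, haX⟩ := Finset.mem_sdiff.1 ha
  rcases Finset.mem_union.1 ha with hG' | hI'
  · obtain ⟨k, -, hk⟩ := Finset.mem_biUnion.1 hG'
    exact (Finset.mem_union.1 (hG k hk)).resolve_right fun h => haX (mem_carrier_of_mem_G h)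
  · exact (Finset.mem_union.1 (hI hI')).resolve_right fun h => haX (mem_carrier_of_mem_I h)

end WovenBasedMatrix

namespace MoveDatum

open WovenBasedMatrix

variable {m : MoveDatum α n} {X Y : WovenBasedMatrix α H n}

theorem valid.mem_I (hm : m.valid X) {x : α} (hx : x = m.x1 ∨ x = m.x2) : x ∈ X.I :=
  hx.elim (· ▸ hm.2.2.1) (· ▸ hm.2.2.2.1)

theorem valid.g_ne_base (hm : m.valid X) (k : Fin n) : m.g ≠ X.s k := by
  rintro hk
  obtain rfl : k = m.j := X.eq_of_mem_G (hk ▸ X.s_mem k) hm.1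
  exact hm.2.1 hk

theorem valid.g_notMem_I (hm : m.valid X) : m.g ∉ X.I :=
  notMem_I_of_mem_G_s14 hm.1

theorem valid.not_affects_of_mem_I (hm : m.valid X) {x : α} (hx : x ∈ X.I) (a : α) :
    ¬ m.Affects x a :=
  fun h => hm.g_notMem_I (h.1 ▸ hx)

theorem valid.not_affects_swap (hm : m.valid X) {a a' : α} (h : m.Affects a a') :
    ¬ m.Affects a' a :=
  hm.not_affects_of_mem_I (hm.mem_I h.2) a

theorem valid.not_affects_base_left (hm : m.valid X) (k : Fin n) (a : α) :
    ¬ m.Affects (X.s k) a :=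
  fun h => hm.g_ne_base k h.1.symm

theorem valid.not_affects_base_right (hm : m.valid X) (k : Fin n) (a : α) :
    ¬ m.Affects a (X.s k) :=
  fun h => X.base_notMem_I k (hm.mem_I h.2)

theorem valid.mono (h : X.Subframe Y) (hm : m.valid X) : m.valid Y :=
  ⟨h.G_subset _ hm.1, h.s_eq ▸ hm.2.1, h.I_subset hm.2.2.1, h.I_subset hm.2.2.2.1, hm.2.2.2.2⟩

theorem valid.not_touches_sdiff (hm : m.valid X) : ¬ m.Touches (Y.carrier \ X.carrier) := by
  simp only [Touches, Finset.mem_sdiff, not_or, not_and, not_not]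
  exact ⟨fun _ => mem_carrier_of_mem_G hm.1, fun _ => mem_carrier_of_mem_I hm.2.2.1,
    fun _ => mem_carrier_of_mem_I hm.2.2.2.1⟩

theorem valid.of_not_touches (h : X.Subframe Y) (hm : m.valid Y)
    (ht : ¬ m.Touches (Y.carrier \ X.carrier)) : m.valid X := by
  have hX : ∀ a ∈ Y.carrier, a ∉ Y.carrier \ X.carrier → a ∈ X.carrier := fun a ha ha' => by
    simpa [ha] using ha'
  simp only [Touches, not_or] at ht
  exact ⟨h.mem_G_of_mem_carrier hm.1 (hX _ (mem_carrier_of_mem_G hm.1) ht.1), h.s_eq ▸ hm.2.1,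
    h.mem_I_of_mem_carrier hm.2.2.1 (hX _ (mem_carrier_of_mem_I hm.2.2.1) ht.2.1),
    h.mem_I_of_mem_carrier hm.2.2.2.1 (hX _ (mem_carrier_of_mem_I hm.2.2.2.1) ht.2.2),
    hm.2.2.2.2⟩

end MoveDatum

section IMap

variable {m : MoveDatum α n} {b b' : α → α → H} {sj a a' : α}

theorem IMap_apply_of_not_affects (h : ¬ m.Affects a a') (h' : ¬ m.Affects a' a) :
    IMap b sj m.g m.x1 m.x2 a a' = b a a' := by
  simp only [IMap, MoveDatum.Affects] at h h' ⊢
  rw [if_neg h, if_neg h']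

theorem IMap_apply_of_affects (h : m.Affects a a') :
    IMap b sj m.g m.x1 m.x2 a a' = b sj a' - b a a' :=
  if_pos h

theorem IMap_apply_of_affects_swap (h : ¬ m.Affects a a') (h' : m.Affects a' a) :
    IMap b sj m.g m.x1 m.x2 a a' = b a sj - b a a' := by
  simp only [IMap, MoveDatum.Affects] at h h' ⊢
  rw [if_neg h, if_pos h']

theorem IMap_eqOn {S : Finset α} (hs : sj ∈ S) (h : ∀ a ∈ S, ∀ a' ∈ S, b a a' = b' a a')
    (g x₁ x₂ : α) :
    ∀ a ∈ S, ∀ a' ∈ S, IMap b sj g x₁ x₂ a a' = IMap b' sj g x₁ x₂ a a' := fun a ha a' ha' => by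
  simp only [IMap]
  split_ifs <;> simp only [h _ ha _ ha', h _ hs _ ha', h _ ha _ hs]

end IMap

namespace WovenBasedMatrix

variable (X : WovenBasedMatrix α H n)

def imove (m : MoveDatum α n) (hm : m.valid X) : WovenBasedMatrix α H n where
  G := X.G
  I := X.I
  s := X.s
  b := IMap X.b (X.s m.j) m.g m.x1 m.x2
  s_mem := X.s_mem
  disjointG := X.disjointG
  disjointI := X.disjointI
  skew a ha a' ha' := by
    have hs : X.s m.j ∈ X.carrier := mem_carrier_of_mem_G (X.s_mem m.j)
    by_cases h : m.Affects a a'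
    · rw [IMap_apply_of_affects h, IMap_apply_of_affects_swap (hm.not_affects_swap h) h,
        X.skew _ hs _ ha', X.skew a ha a' ha']
      abel
    by_cases h' : m.Affects a' a
    · rw [IMap_apply_of_affects h', IMap_apply_of_affects_swap h h', X.skew a ha _ hs,
        X.skew a ha a' ha']
      abel
    rw [IMap_apply_of_not_affects h h', IMap_apply_of_not_affects h' h, X.skew a ha a' ha']
  diag a ha := by
    have h : ¬ m.Affects a a := fun h => hm.not_affects_swap h h
    rw [IMap_apply_of_not_affects h h, X.diag a ha]
  inter_zero x hx y hy := by
    rw [IMap_apply_of_not_affects (hm.not_affects_of_mem_I hx y) (hm.not_affects_of_mem_I hy x),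
      X.inter_zero x hx y hy]
  weave_two x hx := by
    simp only [IMap_apply_of_not_affects (hm.not_affects_base_left _ x)
      (hm.not_affects_of_mem_I hx _)]
    exact X.weave_two x hx
  weave_val i g hg x hx := by
    rw [IMap_apply_of_not_affects (hm.not_affects_base_left i x) (hm.not_affects_of_mem_I hx _)]
    by_cases h : m.Affects g x
    · obtain rfl := X.eq_of_mem_G hg (h.1 ▸ hm.1)
      rw [IMap_apply_of_affects h]
      rcases X.weave_val m.j g hg x hx with h₀ | h₀ <;> rw [h₀] <;> simp
    · rw [IMap_apply_of_not_affects h (hm.not_affects_of_mem_I hx _)]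
      exact X.weave_val i g hg x hx

def moves : (X : WovenBasedMatrix α H n) → (L : List (MoveDatum α n)) →
    (∀ m ∈ L, m.valid X) → WovenBasedMatrix α H n
  | X, [], _ => X
  | X, m :: L, h =>
    (X.imove m (h m List.mem_cons_self)).moves L fun m' hm' => h m' (List.mem_cons_of_mem m hm')

def restrict (Y : WovenBasedMatrix α H n) {X : WovenBasedMatrix α H n} (h : X.Subframe Y) :
    WovenBasedMatrix α H n where
  G := X.G
  I := X.I
  s := X.s
  b := Y.b
  s_mem := X.s_mem
  disjointG := X.disjointG
  disjointI := X.disjointI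
  skew a ha a' ha' := Y.skew a (h.carrier_subset ha) a' (h.carrier_subset ha')
  diag a ha := Y.diag a (h.carrier_subset ha)
  inter_zero x hx y hy := Y.inter_zero x (h.I_subset hx) y (h.I_subset hy)
  weave_two x hx := h.s_eq ▸ Y.weave_two x (h.I_subset hx)
  weave_val i g hg x hx := h.s_eq ▸ Y.weave_val i g (h.G_subset i hg) x (h.I_subset hx)

variable {X} {L : List (MoveDatum α n)}

@[simp] theorem imove_b {m : MoveDatum α n} (hm : m.valid X) :
    (X.imove m hm).b = IMap X.b (X.s m.j) m.g m.x1 m.x2 := rfl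

@[simp] theorem moves_G (h : ∀ m ∈ L, m.valid X) : (X.moves L h).G = X.G := by
  induction L generalizing X with
  | nil => rfl
  | cons m L ih => exact ih _

@[simp] theorem moves_I (h : ∀ m ∈ L, m.valid X) : (X.moves L h).I = X.I := by
  induction L generalizing X with
  | nil => rfl
  | cons m L ih => exact ih _

@[simp] theorem moves_s (h : ∀ m ∈ L, m.valid X) : (X.moves L h).s = X.s := by
  induction L generalizing X with
  | nil => rfl
  | cons m L ih => exact ih _

@[simp] theorem moves_b (h : ∀ m ∈ L, m.valid X) :
    (X.moves L h).b = applyMoves X.s L X.b := by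
  induction L generalizing X with
  | nil => rfl
  | cons m L ih => exact ih _

@[simp] theorem moves_carrier (h : ∀ m ∈ L, m.valid X) : (X.moves L h).carrier = X.carrier := by
  simp [carrier]

theorem Subframe.moves {Y : WovenBasedMatrix α H n} (hY : Y.Subframe X) (h : ∀ m ∈ L, m.valid X) :
    Y.Subframe (X.moves L h) :=
  ⟨by simp [hY.s_eq], by simpa using hY.G_subset, by simpa using hY.I_subset⟩

theorem valid_moves_iff (h : ∀ m ∈ L, m.valid X) {m : MoveDatum α n} :
    m.valid (X.moves L h) ↔ m.valid X := by
  simp [MoveDatum.valid]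

@[simp] theorem restrict_s {Y : WovenBasedMatrix α H n} (h : X.Subframe Y) :
    (Y.restrict h).s = X.s := rfl

@[simp] theorem restrict_b {Y : WovenBasedMatrix α H n} (h : X.Subframe Y) :
    (Y.restrict h).b = Y.b := rfl

@[simp] theorem restrict_carrier {Y : WovenBasedMatrix α H n} (h : X.Subframe Y) :
    (Y.restrict h).carrier = X.carrier := rfl

end WovenBasedMatrix

section applyMoves

variable {s : Fin n → α} {L : List (MoveDatum α n)} {b : α → α → H}

theorem applyMoves_append (L₁ L₂ : List (MoveDatum α n)) (b : α → α → H) :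
    applyMoves s (L₁ ++ L₂) b = applyMoves s L₂ (applyMoves s L₁ b) := by
  induction L₁ generalizing b with
  | nil => rfl
  | cons m L₁ ih => exact ih _

theorem movesApplicable_append {L₁ L₂ : List (MoveDatum α n)} :
    movesApplicable s (L₁ ++ L₂) b ↔
      movesApplicable s L₁ b ∧ movesApplicable s L₂ (applyMoves s L₁ b) := by
  induction L₁ generalizing b with
  | nil => simp [movesApplicable, applyMoves]
  | cons m L₁ ih => simp only [List.cons_append, movesApplicable, ih, and_assoc]; rfl

theorem applyMoves_apply_of_not_affects {a a' : α}
    (h : ∀ m ∈ L, ¬ m.Affects a a' ∧ ¬ m.Affects a' a) : applyMoves s L b a a' = b a a' := by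
  induction L generalizing b with
  | nil => rfl
  | cons m L ih =>
    simp only [List.mem_cons, forall_eq_or_imp] at h
    exact (ih h.2).trans (IMap_apply_of_not_affects h.1.1 h.1.2)

theorem applyMoves_row_of_not_touches {S : Finset α} (h : ∀ m ∈ L, ¬ m.Touches S) {r : α}
    (hr : r ∈ S) (a : α) : applyMoves s L b r a = b r a :=
  applyMoves_apply_of_not_affects fun m hm =>
    ⟨fun h' => h m hm (Or.inl (h'.1 ▸ hr)),
      fun h' => h m hm (Or.inr (h'.2.imp (fun e : r = m.x1 => e ▸ hr) fun e : r = m.x2 => e ▸ hr))⟩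

variable {X : WovenBasedMatrix α H n}

theorem applyMoves_base (hL : ∀ m ∈ L, m.valid X) (k : Fin n) (a : α) :
    applyMoves X.s L b (X.s k) a = b (X.s k) a :=
  applyMoves_apply_of_not_affects fun m hm =>
    ⟨(hL m hm).not_affects_base_left k a, (hL m hm).not_affects_base_right k a⟩

theorem applyMoves_eqOn (hL : ∀ m ∈ L, m.valid X) {b' : α → α → H}
    (h : ∀ a ∈ X.carrier, ∀ a' ∈ X.carrier, b a a' = b' a a') :
    ∀ a ∈ X.carrier, ∀ a' ∈ X.carrier, applyMoves X.s L b a a' = applyMoves X.s L b' a a' := by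
  induction L generalizing b b' with
  | nil => exact h
  | cons m L ih =>
    simp only [List.mem_cons, forall_eq_or_imp] at hL
    exact ih hL.2 (IMap_eqOn (X.mem_carrier_of_mem_G (X.s_mem m.j)) h _ _ _)

theorem movesApplicable_iff_of_eqOn (hL : ∀ m ∈ L, m.valid X) {b' : α → α → H}
    (h : ∀ a ∈ X.carrier, ∀ a' ∈ X.carrier, b a a' = b' a a') :
    movesApplicable X.s L b ↔ movesApplicable X.s L b' := by
  induction L generalizing b b' with
  | nil => exact Iff.rfl
  | cons m L ih =>
    simp only [List.mem_cons, forall_eq_or_imp] at hL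
    have hs := X.mem_carrier_of_mem_G (X.s_mem m.j)
    have hg := X.mem_carrier_of_mem_G hL.1.1
    have h₁ := X.mem_carrier_of_mem_I hL.1.2.2.1
    have h₂ := X.mem_carrier_of_mem_I hL.1.2.2.2.1
    simp only [movesApplicable, MoveApplicable, IsGAnn, IsGUnequal, h _ hg _ h₁, h _ hg _ h₂,
      h _ hs _ h₁, h _ hs _ h₂, ih hL.2 (IMap_eqOn hs h _ _ _)]

/-- Each move only reads entries that the other moves leave alone. -/
theorem movesApplicable_of_pairwise (hL : ∀ m ∈ L, m.valid X)
    (hdisj : L.Pairwise MoveDatum.Disjoint) {b₀ : α → α → H}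
    (happ : ∀ m ∈ L, MoveApplicable m.sq b₀ (X.s m.j) m.g m.x1 m.x2)
    (hb : ∀ m ∈ L, ∀ x, (x = m.x1 ∨ x = m.x2) →
      b m.g x = b₀ m.g x ∧ b (X.s m.j) x = b₀ (X.s m.j) x) :
    movesApplicable X.s L b := by
  induction L generalizing b with
  | nil => trivial
  | cons m L ih =>
    simp only [List.mem_cons, forall_eq_or_imp] at hL happ
    have hb₁ := hb m List.mem_cons_self _ (Or.inl rfl)
    have hb₂ := hb m List.mem_cons_self _ (Or.inr rfl)
    refine ⟨by simpa only [MoveApplicable, IsGAnn, IsGUnequal, hb₁, hb₂] using happ.1,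
      ih hL.2 (List.pairwise_cons.1 hdisj).2 happ.2 fun m' hm' x hx => ?_⟩
    have hxI := (hL.2 m' hm').mem_I hx
    rw [IMap_apply_of_not_affects (fun h => (List.pairwise_cons.1 hdisj).1 m' hm' _ _ h ⟨rfl, hx⟩)
        (hL.1.not_affects_of_mem_I hxI _),
      IMap_apply_of_not_affects (hL.1.not_affects_base_left _ x) (hL.1.not_affects_of_mem_I hxI _)]
    exact hb m' (List.mem_cons_of_mem _ hm') x hx

open Classical in
theorem applyMoves_apply_of_pairwise (hL : ∀ m ∈ L, m.valid X)
    (hdisj : L.Pairwise MoveDatum.Disjoint) {k : Fin n} {g x : α} (hg : g ∈ X.G k)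
    (hx : x ∈ X.I) (b : α → α → H) :
    applyMoves X.s L b g x = if ∃ m ∈ L, m.Affects g x then b (X.s k) x - b g x else b g x := by
  induction L generalizing b with
  | nil => simp [applyMoves]
  | cons m L ih =>
    simp only [List.mem_cons, forall_eq_or_imp] at hL
    simp only [applyMoves, ih hL.2 (List.pairwise_cons.1 hdisj).2, List.mem_cons, or_and_right,
      exists_or, exists_eq_left]
    rw [IMap_apply_of_not_affects (hL.1.not_affects_base_left k x) (hL.1.not_affects_of_mem_I hx _)]
    by_cases h : m.Affects g x
    · have hL' : ¬ ∃ m' ∈ L, m'.Affects g x := fun ⟨m', hm', h'⟩ =>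
        (List.pairwise_cons.1 hdisj).1 m' hm' _ _ h h'
      rw [if_neg hL', if_pos (Or.inl h), IMap_apply_of_affects h,
        X.eq_of_mem_G hg (h.1 ▸ hL.1.1)]
    · simp only [IMap_apply_of_not_affects h (hL.1.not_affects_of_mem_I hx _), h, false_or]

end applyMoves

section ZeroSumPairable

variable [DecidableEq H]

/-- The counting condition under which the nonzero elements split into pairs with sum zero
(`exists_pairing_of_zeroSumPairable`). -/
def ZeroSumPairable (s : Multiset H) : Prop :=
  ∀ c : H, c ≠ 0 → s.count c = s.count (-c) ∧ (c + c = 0 → Even (s.count c))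

theorem zeroSumPairable_of_forall_eq_zero {s : Multiset H} (h : ∀ c ∈ s, c = 0) :
    ZeroSumPairable s := by
  intro c hc
  have hcount : ∀ d : H, d ≠ 0 → s.count d = 0 := fun d hd =>
    Multiset.count_eq_zero.2 fun hds => hd (h d hds)
  rw [hcount c hc, hcount (-c) (neg_ne_zero.2 hc)]
  exact ⟨rfl, fun _ => Even.zero⟩

theorem zeroSumPairable_zero_cons_iff {s : Multiset H} :
    ZeroSumPairable (0 ::ₘ s) ↔ ZeroSumPairable s := by
  refine forall₂_congr fun c hc => ?_
  rw [Multiset.count_cons_of_ne hc, Multiset.count_cons_of_ne (neg_ne_zero.2 hc)]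

theorem zeroSumPairable_cons_neg_cons_iff {a : H} {s : Multiset H} :
    ZeroSumPairable (a ::ₘ -a ::ₘ s) ↔ ZeroSumPairable s := by
  refine forall₂_congr fun c hc => ?_
  have hneg : (-c = a ↔ c = -a) := neg_eq_iff_eq_neg
  simp only [Multiset.count_cons, neg_inj, hneg]
  by_cases h : c + c = 0
  · have hc' : -c = c := neg_eq_of_add_eq_zero_left h
    have ha : (c = -a ↔ c = a) := by rw [← hneg, hc']
    simp only [hc', ha, add_assoc, true_and, h, true_implies, Nat.even_add, iff_true]
  · simp only [h, false_implies, and_true]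
    omega

theorem ZeroSumPairable.filter_ne_zero {s : Multiset H} (h : ZeroSumPairable s) :
    ZeroSumPairable (s.filter (· ≠ 0)) := by
  intro c hc
  rw [Multiset.count_filter_of_pos (p := (· ≠ 0)) hc,
    Multiset.count_filter_of_pos (p := (· ≠ 0)) (neg_ne_zero.2 hc)]
  exact h c hc

theorem ZeroSumPairable.neg_mem_of_cons {c : H} {s : Multiset H} (h : ZeroSumPairable (c ::ₘ s))
    (hc : c ≠ 0) : -c ∈ s := by
  obtain ⟨hcount, heven⟩ := h c hc
  rw [Multiset.count_cons_self, Multiset.count_cons] at hcount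
  rw [← Multiset.count_pos]
  by_cases hcc : c + c = 0
  · have hneg : -c = c := neg_eq_of_add_eq_zero_left hcc
    have := heven hcc
    rw [Multiset.count_cons_self, Nat.even_add_one, Nat.not_even_iff_odd] at this
    rw [hneg]
    exact this.pos
  · have hne : -c ≠ c := fun h => hcc (by rw [← neg_add_cancel c, h])
    rw [if_neg hne] at hcount
    omega

/-- This is how an intersection move acts on the differences along a row. -/
theorem ZeroSumPairable.cons_cons_of_toggle {u₁ u₂ v₁ v₂ : H} {s : Multiset H}
    (h : ZeroSumPairable (u₁ ::ₘ u₂ ::ₘ s)) (h₁ : u₁ = 0 ∨ v₁ = 0) (h₂ : u₂ = 0 ∨ v₂ = 0)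
    (hsum : v₁ + v₂ = u₁ + u₂) : ZeroSumPairable (v₁ ::ₘ v₂ ::ₘ s) := by
  rcases h₁ with rfl | rfl <;> rcases h₂ with rfl | rfl
  · rw [zero_add, add_eq_zero_iff_eq_neg'] at hsum
    rwa [hsum, zeroSumPairable_cons_neg_cons_iff, ← zeroSumPairable_zero_cons_iff,
      ← zeroSumPairable_zero_cons_iff]
  · rw [add_zero, zero_add] at hsum
    rwa [hsum, Multiset.cons_swap]
  · rw [zero_add, add_zero] at hsum
    rwa [hsum, Multiset.cons_swap]
  · rw [zero_add, eq_comm, add_eq_zero_iff_eq_neg'] at hsum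
    rwa [hsum, zeroSumPairable_cons_neg_cons_iff, ← zeroSumPairable_zero_cons_iff,
      ← zeroSumPairable_zero_cons_iff] at h

theorem exists_pairing_of_zeroSumPairable (f : α → H) (V : Finset α) (h₀ : ∀ x ∈ V, f x ≠ 0)
    (hV : ZeroSumPairable (V.val.map f)) :
    ∃ P : List (α × α), (∀ p ∈ P, p.1 ∈ V ∧ p.2 ∈ V ∧ p.1 ≠ p.2 ∧ f p.1 + f p.2 = 0) ∧
      P.Pairwise (fun p q => ∀ z, (z = p.1 ∨ z = p.2) → ¬ (z = q.1 ∨ z = q.2)) ∧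
      ∀ x ∈ V, ∃ p ∈ P, x = p.1 ∨ x = p.2 := by
  induction V using Finset.strongInduction with
  | H V ih =>
  rcases V.eq_empty_or_nonempty with rfl | ⟨x, hx⟩
  · exact ⟨[], by simp, List.Pairwise.nil, by simp⟩
  have hVx : V.val = x ::ₘ (V.erase x).val := by
    rw [Finset.erase_val V x, Multiset.cons_erase hx]
  rw [hVx, Multiset.map_cons] at hV
  obtain ⟨y, hy, hfy⟩ := Multiset.mem_map.1 (hV.neg_mem_of_cons (h₀ x hx))
  have hVy : (V.erase x).val = y ::ₘ ((V.erase x).erase y).val := by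
    rw [Finset.erase_val (V.erase x) y, Multiset.cons_erase hy]
  rw [hVy, Multiset.map_cons, hfy, zeroSumPairable_cons_neg_cons_iff] at hV
  have hsub : (V.erase x).erase y ⊂ V :=
    (Finset.erase_ssubset hy).trans (Finset.erase_ssubset hx)
  obtain ⟨P, hP, hPdisj, hPcover⟩ := ih _ hsub (fun z hz => h₀ z (hsub.subset hz)) hV
  refine ⟨(x, y) :: P, ?_, ?_, ?_⟩
  · simp only [List.mem_cons, forall_eq_or_imp]
    refine ⟨⟨hx, Finset.mem_of_mem_erase hy, (Finset.ne_of_mem_erase hy).symm, ?_⟩,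
      fun p hp => ?_⟩
    · rw [hfy, add_neg_cancel]
    · obtain ⟨h₁, h₂, h⟩ := hP p hp
      exact ⟨hsub.subset h₁, hsub.subset h₂, h⟩
  · refine List.pairwise_cons.2 ⟨fun p hp z hz hzp => ?_, hPdisj⟩
    have hzV : z ∈ (V.erase x).erase y := hzp.elim (· ▸ (hP p hp).1) (· ▸ (hP p hp).2.1)
    rcases hz with rfl | rfl
    · exact (Finset.ne_of_mem_erase (Finset.mem_of_mem_erase hzV)) rfl
    · exact (Finset.ne_of_mem_erase hzV) rfl
  · intro z hz
    by_cases hzx : z = x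
    · exact ⟨(x, y), List.mem_cons_self, Or.inl hzx⟩
    by_cases hzy : z = y
    · exact ⟨(x, y), List.mem_cons_self, Or.inr hzy⟩
    obtain ⟨p, hp, hzp⟩ := hPcover z (Finset.mem_erase.2 ⟨hzy, Finset.mem_erase.2 ⟨hzx, hz⟩⟩)
    exact ⟨p, List.mem_cons_of_mem _ hp, hzp⟩

end ZeroSumPairable

section Toggle

variable {u v σ σ₁ σ₂ r₁ r₂ : H}

theorem eq_sub_of_ne_of_zero_or_eq (hu : u = 0 ∨ u = σ) (hv : v = 0 ∨ v = σ) (h : v ≠ u) :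
    v = σ - u := by
  rcases hu with rfl | rfl <;> rcases hv with rfl | rfl <;> simp_all

theorem sub_eq_zero_or_sub_sub_eq_zero (hu : u = 0 ∨ u = σ) (hv : v = 0 ∨ v = σ) :
    u - v = 0 ∨ σ - u - v = 0 := by
  rcases hu with rfl | rfl <;> rcases hv with rfl | rfl <;> simp

/-- The disjunction `h` says that `x₁, x₂` is a `g`-annihilating or `g`-unequal pair, where
`rₖ = b g xₖ` and `σₖ = b (s j) xₖ`. -/
theorem add_eq_add_add_of_pair (h₁ : r₁ = 0 ∨ r₁ = σ₁) (h₂ : r₂ = 0 ∨ r₂ = σ₂)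
    (h : (r₁ + r₂ = 0 ∧ σ₁ + σ₂ = 0) ∨ (r₁ ≠ r₂ ∧ σ₁ = σ₂)) :
    σ₁ + σ₂ = (r₁ + r₂) + (r₁ + r₂) := by
  rcases h with ⟨hr, hσ⟩ | ⟨hr, rfl⟩
  · rw [hr, hσ, add_zero]
  · rcases h₁ with rfl | rfl <;> rcases h₂ with rfl | rfl <;> simp_all

theorem pair_of_add_eq_zero (h₁ : r₁ = 0 ∨ r₁ = σ₁) (h₂ : r₂ = 0 ∨ r₂ = σ₂)
    (hne₁ : σ₁ - r₁ ≠ r₁) (hne₂ : σ₂ - r₂ ≠ r₂)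
    (hsum : (σ₁ - r₁ - r₁) + (σ₂ - r₂ - r₂) = 0) :
    (r₁ + r₂ = 0 ∧ σ₁ + σ₂ = 0) ∨ (r₁ ≠ r₂ ∧ σ₁ = σ₂) := by
  rcases h₁ with rfl | rfl <;> rcases h₂ with rfl | rfl
  · exact Or.inl ⟨add_zero 0, by simpa using hsum⟩
  · refine Or.inr ⟨fun h => hne₂ (by rw [← h]; abel), sub_eq_zero.1 ?_⟩
    rw [← hsum]; abel
  · refine Or.inr ⟨fun h => hne₁ (by rw [h]; abel), sub_eq_zero.1 ?_⟩
    rw [← neg_eq_zero, ← hsum]; abel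
  · refine Or.inl ⟨?_, ?_⟩ <;> (rw [← neg_eq_zero, ← hsum]; abel)

end Toggle

namespace WovenBasedMatrix

variable {X : WovenBasedMatrix α H n}

theorem applyMoves_weave_val {L : List (MoveDatum α n)} (hL : ∀ m ∈ L, m.valid X) {k : Fin n}
    {g x : α} (hg : g ∈ X.G k) (hx : x ∈ X.I) :
    applyMoves X.s L X.b g x = 0 ∨ applyMoves X.s L X.b g x = X.b (X.s k) x := by
  simpa [applyMoves_base hL] using (X.moves L hL).weave_val k g (by simpa using hg) x
    (by simpa using hx)

section ZeroSumPairable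

variable [DecidableEq H] {k : Fin n} {g : α} {r₀ : α → H}

theorem zeroSumPairable_imove {m : MoveDatum α n} (hm : m.valid X)
    (happ : MoveApplicable m.sq X.b (X.s m.j) m.g m.x1 m.x2) (hg : g ∈ X.G k)
    (hr₀ : ∀ x ∈ X.I, r₀ x = 0 ∨ r₀ x = X.b (X.s k) x)
    (h : ZeroSumPairable (X.I.val.map fun x => X.b g x - r₀ x)) :
    ZeroSumPairable (X.I.val.map fun x => (X.imove m hm).b g x - r₀ x) := by
  by_cases hgm : g = m.g
  swap
  · rwa [Multiset.map_congr rfl fun x hx => by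
      rw [imove_b, IMap_apply_of_not_affects (fun h => hgm h.1) (hm.not_affects_of_mem_I hx _)]]
  subst hgm
  obtain rfl := X.eq_of_mem_G hg hm.1
  have hx₂ : m.x2 ∈ X.I.erase m.x1 := Finset.mem_erase.2 ⟨hm.2.2.2.2.symm, hm.2.2.2.1⟩
  have hI : X.I.val = m.x1 ::ₘ m.x2 ::ₘ ((X.I.erase m.x1).erase m.x2).val := by
    rw [Finset.erase_val (X.I.erase m.x1), Multiset.cons_erase hx₂, Finset.erase_val,
      Multiset.cons_erase hm.2.2.1]
  have hrest : ∀ x ∈ ((X.I.erase m.x1).erase m.x2).val,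
      (X.imove m hm).b m.g x - r₀ x = X.b m.g x - r₀ x := fun x hx => by
    have hx' : x ∈ (X.I.erase m.x1).erase m.x2 := hx
    rw [imove_b, IMap_apply_of_not_affects (fun h => h.2.elim (Finset.ne_of_mem_erase
      (Finset.mem_of_mem_erase hx')) (Finset.ne_of_mem_erase hx'))
      (hm.not_affects_of_mem_I (Finset.mem_of_mem_erase (Finset.mem_of_mem_erase hx')) _)]
  rw [hI, Multiset.map_cons, Multiset.map_cons] at h ⊢
  rw [Multiset.map_congr rfl hrest, imove_b, IMap_apply_of_affects ⟨rfl, Or.inl rfl⟩,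
    IMap_apply_of_affects ⟨rfl, Or.inr rfl⟩]
  have hv₁ := X.weave_val m.j m.g hg m.x1 hm.2.2.1
  have hv₂ := X.weave_val m.j m.g hg m.x2 hm.2.2.2.1
  refine h.cons_cons_of_toggle (sub_eq_zero_or_sub_sub_eq_zero hv₁ (hr₀ _ hm.2.2.1))
    (sub_eq_zero_or_sub_sub_eq_zero hv₂ (hr₀ _ hm.2.2.2.1)) ?_
  have hpair := add_eq_add_add_of_pair hv₁ hv₂ (by
    unfold MoveApplicable IsGAnn IsGUnequal at happ
    split_ifs at happ
    exacts [Or.inl happ, Or.inr happ])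
  rw [← sub_eq_zero, ← sub_eq_zero.2 hpair]
  abel

theorem zeroSumPairable_applyMoves {N : List (MoveDatum α n)} (hN : ∀ m ∈ N, m.valid X)
    (happ : movesApplicable X.s N X.b) (hg : g ∈ X.G k)
    (hr₀ : ∀ x ∈ X.I, r₀ x = 0 ∨ r₀ x = X.b (X.s k) x)
    (h : ZeroSumPairable (X.I.val.map fun x => X.b g x - r₀ x)) :
    ZeroSumPairable (X.I.val.map fun x => applyMoves X.s N X.b g x - r₀ x) := by
  induction N generalizing X with
  | nil => exact h
  | cons m N ih =>
    have hm := hN m List.mem_cons_self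
    exact ih (X := X.imove m hm) (fun m' hm' => hN m' (List.mem_cons_of_mem _ hm')) happ.2 hg
      (fun x hx => by
        change r₀ x = 0 ∨ r₀ x = IMap X.b (X.s m.j) m.g m.x1 m.x2 (X.s k) x
        rw [IMap_apply_of_not_affects (hm.not_affects_base_left k x)
          (hm.not_affects_of_mem_I hx _)]
        exact hr₀ x hx)
      (zeroSumPairable_imove hm happ.1 hg hr₀ h)

theorem zeroSumPairable_changed {N : List (MoveDatum α n)} (hN : ∀ m ∈ N, m.valid X)
    (happ : movesApplicable X.s N X.b) (hg : g ∈ X.G k) :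
    ZeroSumPairable ((X.I.filter fun x => applyMoves X.s N X.b g x ≠ X.b g x).val.map
      fun x => applyMoves X.s N X.b g x - X.b g x) := by
  have h := (zeroSumPairable_applyMoves hN happ hg (X.weave_val k g hg)
    (zeroSumPairable_of_forall_eq_zero fun c hc => by
      obtain ⟨x, -, rfl⟩ := Multiset.mem_map.1 hc
      exact sub_self _)).filter_ne_zero
  rw [Multiset.filter_map, ← Finset.filter_val] at h
  convert h using 3
  exact Finset.filter_congr fun x _ => sub_ne_zero.symm

end ZeroSumPairable

theorem exists_moves_on_row {N : List (MoveDatum α n)} (hN : ∀ m ∈ N, m.valid X)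
    (happ : movesApplicable X.s N X.b) {k : Fin n} {g : α} (hg : g ∈ X.G k) (hgs : g ≠ X.s k) :
    ∃ B : List (MoveDatum α n),
      (∀ m ∈ B, m.g = g ∧ m.valid X ∧ MoveApplicable m.sq X.b (X.s m.j) m.g m.x1 m.x2) ∧
      B.Pairwise MoveDatum.Disjoint ∧
      ∀ x ∈ X.I, (∃ m ∈ B, m.Affects g x) ↔ applyMoves X.s N X.b g x ≠ X.b g x := by
  classical
  set σ := X.b (X.s k)
  set r := fun x => applyMoves X.s N X.b g x
  set V := X.I.filter fun x => r x ≠ X.b g x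
  have hr₀ : ∀ x ∈ X.I, X.b g x = 0 ∨ X.b g x = σ x := X.weave_val k g hg
  have hflip : ∀ x ∈ V, r x = σ x - X.b g x := fun x hx =>
    have hx' := Finset.mem_filter.1 hx
    eq_sub_of_ne_of_zero_or_eq (hr₀ x hx'.1) (applyMoves_weave_val hN hg hx'.1) hx'.2
  obtain ⟨P, hP, hPdisj, hPcover⟩ := exists_pairing_of_zeroSumPairable _ V
    (fun x hx => sub_ne_zero.2 (Finset.mem_filter.1 hx).2) (zeroSumPairable_changed hN happ hg)
  let move : α × α → MoveDatum α n := fun p =>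
    ⟨k, if X.b g p.1 + X.b g p.2 = 0 ∧ σ p.1 + σ p.2 = 0 then 0 else 1, g, p.1, p.2⟩
  refine ⟨P.map move, ?_, List.pairwise_map.2 (hPdisj.imp fun h a a' ha ha' => h a' ha.2 ha'.2),
    fun x hx => ⟨?_, fun hne => ?_⟩⟩
  · simp only [List.mem_map]
    rintro _ ⟨p, hp, rfl⟩
    obtain ⟨h₁, h₂, hne, hsum⟩ := hP p hp
    have h₁' := Finset.mem_filter.1 h₁
    have h₂' := Finset.mem_filter.1 h₂
    have hpair := pair_of_add_eq_zero (hr₀ _ h₁'.1) (hr₀ _ h₂'.1)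
      (hflip _ h₁ ▸ h₁'.2) (hflip _ h₂ ▸ h₂'.2) (by rwa [hflip _ h₁, hflip _ h₂] at hsum)
    refine ⟨rfl, ⟨hg, hgs, h₁'.1, h₂'.1, hne⟩, ?_⟩
    by_cases h₀ : X.b g p.1 + X.b g p.2 = 0 ∧ σ p.1 + σ p.2 = 0
    · simpa only [move, if_pos h₀, MoveApplicable, if_true, IsGAnn] using h₀
    · simpa only [move, if_neg h₀, MoveApplicable, one_ne_zero, if_false, IsGUnequal]
        using hpair.resolve_left h₀
  · rintro ⟨_, hm, hA⟩
    obtain ⟨p, hp, rfl⟩ := List.mem_map.1 hm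
    have hxV : x ∈ V := hA.2.elim (· ▸ (hP p hp).1) (· ▸ (hP p hp).2.1)
    exact (Finset.mem_filter.1 hxV).2
  · obtain ⟨p, hp, hxp⟩ := hPcover x (Finset.mem_filter.2 ⟨hx, hne⟩)
    exact ⟨move p, List.mem_map_of_mem hp, rfl, hxp⟩

end WovenBasedMatrix

theorem countP_le_card_of_pairwise {L : List (MoveDatum α n)}
    (hdisj : L.Pairwise MoveDatum.Disjoint) {p : MoveDatum α n → Bool} {a : α} {W : Finset α}
    (hW : ∀ m ∈ L, p m → m.g = a ∧ (m.x1 ∈ W ∨ m.x2 ∈ W)) : L.countP p ≤ W.card := by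
  induction L generalizing W with
  | nil => simp
  | cons m L ih =>
    simp only [List.mem_cons, forall_eq_or_imp] at hW
    rw [List.countP_cons]
    by_cases hpm : p m
    · obtain ⟨hma, hw⟩ := hW.1 hpm
      obtain ⟨w, hw, hwm⟩ : ∃ w ∈ W, w = m.x1 ∨ w = m.x2 :=
        hw.elim (fun h => ⟨_, h, Or.inl rfl⟩) (fun h => ⟨_, h, Or.inr rfl⟩)
      have hL := ih (W := W.erase w) (List.pairwise_cons.1 hdisj).2 fun m' hm' hp' => by
        obtain ⟨hg', hx'⟩ := hW.2 m' hm' hp'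
        have hne : ∀ x, (x = m'.x1 ∨ x = m'.x2) → x ≠ w := fun x hx hxw =>
          (List.pairwise_cons.1 hdisj).1 m' hm' a w ⟨hma.symm, hwm⟩ ⟨hg'.symm, hxw ▸ hx⟩
        exact ⟨hg', hx'.imp (fun h => Finset.mem_erase.2 ⟨hne _ (Or.inl rfl), h⟩)
          (fun h => Finset.mem_erase.2 ⟨hne _ (Or.inr rfl), h⟩)⟩
      rw [Finset.card_erase_of_mem hw] at hL
      have := Finset.card_pos.2 ⟨w, hw⟩
      simp only [hpm, if_true]
      omega
    · simpa [hpm] using ih (List.pairwise_cons.1 hdisj).2 hW.2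

theorem ReducedMoves.filter {L : List (MoveDatum α n)} (h : ReducedMoves L)
    (p : MoveDatum α n → Bool) : ReducedMoves (L.filter p) := by
  obtain ⟨Bs, rfl, hg, hpw, hcount⟩ := h
  refine ⟨Bs.map (List.filter p), List.filter_flatten, ?_,
    List.pairwise_map.2 (hpw.imp fun h m hm m' hm' =>
      h m (List.mem_of_mem_filter hm) m' (List.mem_of_mem_filter hm')), ?_⟩
  all_goals simp only [List.mem_map]; rintro _ ⟨B, hB, rfl⟩
  · exact fun m hm m' hm' => hg B hB m (List.mem_of_mem_filter hm) m' (List.mem_of_mem_filter hm')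
  · exact fun x => (List.filter_sublist).countP_le.trans (hcount B hB x)

theorem reducedMoves_flatMap {gs : List α} (hgs : gs.Nodup) {B : α → List (MoveDatum α n)}
    (hB : ∀ g, ∀ m ∈ B g, m.g = g) (hdisj : ∀ g, (B g).Pairwise MoveDatum.Disjoint) :
    ReducedMoves (gs.flatMap B) := by
  refine ⟨gs.map B, List.flatMap_def, ?_, List.pairwise_map.2 (hgs.imp fun hne m hm m' hm' =>
    by rwa [hB _ m hm, hB _ m' hm']), ?_⟩
  all_goals simp only [List.mem_map]; rintro _ ⟨g, -, rfl⟩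
  · exact fun m hm m' hm' => (hB g m hm).trans (hB g m' hm').symm
  · refine fun x => (countP_le_card_of_pairwise (hdisj g) (a := g)
      fun m hm hx => ⟨hB g m hm, ?_⟩).trans (Finset.card_singleton x).le
    simpa only [decide_eq_true_eq, Finset.mem_singleton] using hx

namespace WovenBasedMatrix

variable {X : WovenBasedMatrix α H n}

theorem applyMoves_skew {L : List (MoveDatum α n)} (hL : ∀ m ∈ L, m.valid X) {a a' : α}
    (ha : a ∈ X.carrier) (ha' : a' ∈ X.carrier) :
    applyMoves X.s L X.b a a' = -applyMoves X.s L X.b a' a := by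
  simpa using (X.moves L hL).skew a (by rw [moves_G, moves_I]; exact ha) a'
    (by rw [moves_G, moves_I]; exact ha')

/-- Intersection moves only change entries between a non-base element of `G` and an element
of `I`. -/
theorem applyMoves_eqOn_of_eqOn_G_I {L L' : List (MoveDatum α n)} (hL : ∀ m ∈ L, m.valid X)
    (hL' : ∀ m ∈ L', m.valid X)
    (h : ∀ k, ∀ g ∈ X.G k, g ≠ X.s k → ∀ x ∈ X.I,
      applyMoves X.s L X.b g x = applyMoves X.s L' X.b g x) :
    ∀ a ∈ X.carrier, ∀ a' ∈ X.carrier, applyMoves X.s L X.b a a' = applyMoves X.s L' X.b a a' := by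
  have hfix : ∀ {L : List (MoveDatum α n)}, (∀ m ∈ L, m.valid X) → ∀ {a a' : α},
      (¬ ∃ k, a ∈ X.G k ∧ a ≠ X.s k ∧ a' ∈ X.I) → (¬ ∃ k, a' ∈ X.G k ∧ a' ≠ X.s k ∧ a ∈ X.I) →
      applyMoves X.s L X.b a a' = X.b a a' := fun {L} hL {a a'} h₁ h₂ =>
    applyMoves_apply_of_not_affects fun m hm =>
      have hm := hL m hm
      ⟨fun hA => h₁ ⟨m.j, hA.1 ▸ hm.1, hA.1 ▸ hm.2.1, hm.mem_I hA.2⟩,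
        fun hA => h₂ ⟨m.j, hA.1 ▸ hm.1, hA.1 ▸ hm.2.1, hm.mem_I hA.2⟩⟩
  intro a ha a' ha'
  by_cases h₁ : ∃ k, a ∈ X.G k ∧ a ≠ X.s k ∧ a' ∈ X.I
  · obtain ⟨k, hk, hks, ha'I⟩ := h₁
    exact h k a hk hks a' ha'I
  by_cases h₂ : ∃ k, a' ∈ X.G k ∧ a' ≠ X.s k ∧ a ∈ X.I
  · obtain ⟨k, hk, hks, haI⟩ := h₂
    rw [applyMoves_skew hL ha ha', applyMoves_skew hL' ha ha', h k a' hk hks a haI]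
  rw [hfix hL h₁ h₂, hfix hL' h₁ h₂]

theorem applyMoves_eqOn_of_affects_iff {N L : List (MoveDatum α n)} (hN : ∀ m ∈ N, m.valid X)
    (hL : ∀ m ∈ L, m.valid X) (hdisj : L.Pairwise MoveDatum.Disjoint)
    (h : ∀ k, ∀ g ∈ X.G k, g ≠ X.s k → ∀ x ∈ X.I,
      (∃ m ∈ L, m.Affects g x) ↔ applyMoves X.s N X.b g x ≠ X.b g x) :
    ∀ a ∈ X.carrier, ∀ a' ∈ X.carrier, applyMoves X.s L X.b a a' = applyMoves X.s N X.b a a' := by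
  refine applyMoves_eqOn_of_eqOn_G_I hL hN fun k g hg hgs x hx => ?_
  rw [applyMoves_apply_of_pairwise hL hdisj hg hx]
  split_ifs with hA
  · exact (eq_sub_of_ne_of_zero_or_eq (X.weave_val k g hg x hx) (applyMoves_weave_val hN hg hx)
      ((h k g hg hgs x hx).1 hA)).symm
  · exact (not_not.1 (mt (h k g hg hgs x hx).2 hA)).symm

theorem exists_reduced_moves {N : List (MoveDatum α n)} (hN : ∀ m ∈ N, m.valid X)
    (happ : movesApplicable X.s N X.b) :
    ∃ M : List (MoveDatum α n), ReducedMoves M ∧ ∀ L : List (MoveDatum α n), L.Perm M →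
      (∀ m ∈ L, m.valid X) ∧ L.Pairwise MoveDatum.Disjoint ∧ movesApplicable X.s L X.b ∧
      ∀ a ∈ X.carrier, ∀ a' ∈ X.carrier, applyMoves X.s L X.b a a' = applyMoves X.s N X.b a a' := by
  classical
  have hB : ∀ g, ∃ B : List (MoveDatum α n),
      (∀ m ∈ B, m.g = g ∧ m.valid X ∧ MoveApplicable m.sq X.b (X.s m.j) m.g m.x1 m.x2) ∧
      B.Pairwise MoveDatum.Disjoint ∧ ∀ k, g ∈ X.G k → g ≠ X.s k →
        ∀ x ∈ X.I, (∃ m ∈ B, m.Affects g x) ↔ applyMoves X.s N X.b g x ≠ X.b g x := by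
    intro g
    by_cases hg : ∃ k, g ∈ X.G k ∧ g ≠ X.s k
    · obtain ⟨k, hk, hks⟩ := hg
      obtain ⟨B, hB, hdisj, hrow⟩ := exists_moves_on_row hN happ hk hks
      exact ⟨B, hB, hdisj, fun _ _ _ => hrow⟩
    · exact ⟨[], by simp, List.Pairwise.nil, fun k hk hks => absurd ⟨k, hk, hks⟩ hg⟩
  choose B hB hdisj hrow using hB
  set gs := (Finset.univ.biUnion X.G).toList
  have hgs : gs.Nodup := Finset.nodup_toList _
  have hmem : ∀ {L : List (MoveDatum α n)}, L.Perm (gs.flatMap B) → ∀ m ∈ L, ∃ g, m ∈ B g :=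
    fun hL m hm => (List.mem_flatMap.1 (hL.mem_iff.1 hm)).imp fun _ h => h.2
  refine ⟨gs.flatMap B, reducedMoves_flatMap hgs (fun g m hm => (hB g m hm).1) hdisj,
    fun L hL => ?_⟩
  have hLval : ∀ m ∈ L, m.valid X := fun m hm =>
    (hmem hL m hm).elim fun g hm => (hB g m hm).2.1
  have hLdisj : L.Pairwise MoveDatum.Disjoint :=
    (hL.pairwise_iff fun h a a' h₁ h₂ => h a a' h₂ h₁).2
      (List.pairwise_flatMap.2 ⟨fun g _ => hdisj g, hgs.imp fun hne m hm m' hm' _ _ hA hA' =>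
        hne ((hB _ m hm).1.symm.trans (hA.1.symm.trans (hA'.1.trans (hB _ m' hm').1)))⟩)
  refine ⟨hLval, hLdisj, movesApplicable_of_pairwise hLval hLdisj (fun m hm =>
    (hmem hL m hm).elim fun g hm => (hB g m hm).2.2) fun _ _ _ _ => ⟨rfl, rfl⟩,
    applyMoves_eqOn_of_affects_iff hN hLval hLdisj fun k g hg hgs x hx => ?_⟩
  rw [← hrow g k hg hgs x hx]
  constructor
  · rintro ⟨m, hm, hA⟩
    obtain ⟨g', hm'⟩ := hmem hL m hm
    exact ⟨m, (hA.1.trans (hB g' m hm').1).symm ▸ hm', hA⟩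
  · rintro ⟨m, hm, hA⟩
    exact ⟨m, hL.mem_iff.2 (List.mem_flatMap.2 ⟨g, Finset.mem_toList.2
      (Finset.mem_biUnion.2 ⟨k, Finset.mem_univ _, hg⟩), hm⟩), hA⟩

end WovenBasedMatrix

section ExtRelAt

open WovenBasedMatrix

variable {X Y X' Y' : WovenBasedMatrix α H n} {i : ℕ}

theorem extRelAt_cases (h : ExtRelAt i X Y) :
    i = 1 ∧ ExtRel1 X Y ∨ i = 2 ∧ ExtRel2 X Y ∨ i = 3 ∧ ExtRel3 X Y ∨ i = 4 ∧ ExtRel4 X Y :=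
  match i, h with
  | 1, h => Or.inl ⟨rfl, h⟩
  | 2, h => Or.inr (Or.inl ⟨rfl, h⟩)
  | 3, h => Or.inr (Or.inr (Or.inl ⟨rfl, h⟩))
  | 4, h => Or.inr (Or.inr (Or.inr ⟨rfl, h⟩))

theorem ExtRelAt.subframe (h : ExtRelAt i X Y) : X.Subframe Y := by
  have hsub : ∀ {j : Fin n}, X.G j ⊆ Y.G j → (∀ k, k ≠ j → Y.G k = X.G k) → ∀ k, X.G k ⊆ Y.G k :=
    fun {j} hj hG k => by
      by_cases hk : k = j
      · exact hk ▸ hj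
      · exact (hG k hk).ge
  rcases extRelAt_cases h with ⟨-, j, g, -, hs, hI, hGj, hG, -⟩ | ⟨-, j, g, -, hs, hI, hGj, hG, -⟩ |
    ⟨-, j, g₁, g₂, -, -, -, hs, hI, hGj, hG, -⟩ | ⟨-, x₁, x₂, -, -, -, hs, hG, hI, -⟩
  · exact ⟨hs.symm, hsub (hGj ▸ Finset.subset_insert _ _) hG, hI.ge⟩
  · exact ⟨hs.symm, hsub (hGj ▸ Finset.subset_insert _ _) hG, hI.ge⟩
  · exact ⟨hs.symm, hsub (hGj ▸ (Finset.subset_insert _ _).trans (Finset.subset_insert _ _)) hG,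
      hI.ge⟩
  · exact ⟨hs.symm, fun k => (congrFun hG k).ge,
      hI ▸ (Finset.subset_insert _ _).trans (Finset.subset_insert _ _)⟩

theorem ExtRelAt.b_eq (h : ExtRelAt i X Y) :
    ∀ a ∈ X.carrier, ∀ a' ∈ X.carrier, Y.b a a' = X.b a a' := by
  rcases extRelAt_cases h with ⟨-, -, -, -, -, -, -, -, hb, -⟩ | ⟨-, -, -, -, -, -, -, -, hb, -⟩ |
    ⟨-, -, -, -, -, -, -, -, -, -, -, hb, -⟩ | ⟨-, -, -, -, -, -, -, -, -, hb, -⟩ <;> exact hb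

theorem ExtRelAt.card_sdiff_le (h : ExtRelAt i X Y) : (Y.carrier \ X.carrier).card ≤ 2 := by
  have hpart : ∀ {j : Fin n} {W : Finset α}, W.card ≤ 2 → Y.I = X.I → Y.G j = W ∪ X.G j →
      (∀ k, k ≠ j → Y.G k = X.G k) → (Y.carrier \ X.carrier).card ≤ 2 :=
    fun {j W} hW hI hGj hG => (Finset.card_le_card (carrier_sdiff_subset (W := W) (fun k => by
      by_cases hk : k = j
      · exact (hk ▸ hGj).le
      · exact (hG k hk).le.trans Finset.subset_union_right) (hI.le.trans
        Finset.subset_union_right))).trans hW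
  rcases extRelAt_cases h with ⟨-, j, g, -, -, hI, hGj, hG, -⟩ | ⟨-, j, g, -, -, hI, hGj, hG, -⟩ |
    ⟨-, j, g₁, g₂, -, -, -, -, hI, hGj, hG, -⟩ | ⟨-, x₁, x₂, -, -, -, -, hG, hI, -⟩
  · exact hpart (W := {g}) (by simp) hI (by rw [hGj, Finset.insert_eq]) hG
  · exact hpart (W := {g}) (by simp) hI (by rw [hGj, Finset.insert_eq]) hG
  · exact hpart (W := {g₁, g₂}) Finset.card_le_two hI
      (by rw [hGj, Finset.insert_eq, Finset.insert_eq, Finset.insert_eq, Finset.union_assoc]) hG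
  · refine (Finset.card_le_card (carrier_sdiff_subset (W := {x₁, x₂}) (fun k => ?_)
      ?_)).trans Finset.card_le_two
    · exact (congrFun hG k).le.trans Finset.subset_union_right
    · rw [hI, Finset.insert_eq, Finset.insert_eq, Finset.insert_eq, Finset.union_assoc]

theorem ExtRelAt.sdiff_subset_I (h : ExtRelAt 4 X Y) : Y.carrier \ X.carrier ⊆ Y.I := by
  obtain ⟨-, -, -, -, -, -, hG, -⟩ := h
  intro a ha
  obtain ⟨ha, haX⟩ := Finset.mem_sdiff.1 ha
  refine (Finset.mem_union.1 ha).resolve_left fun hG' => haX ?_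
  obtain ⟨k, -, hk⟩ := Finset.mem_biUnion.1 hG'
  exact mem_carrier_of_mem_G (hG ▸ hk)

/-- An elementary extension only constrains the rows of the new elements and of the base
elements, and the entries between old elements. -/
theorem ExtRelAt.of_rows (h : ExtRelAt i X Y)
    (hXG : X'.G = X.G) (hXI : X'.I = X.I) (hXs : X'.s = X.s)
    (hYG : Y'.G = Y.G) (hYI : Y'.I = Y.I) (hYs : Y'.s = Y.s)
    (hb : ∀ a ∈ X.carrier, ∀ a' ∈ X.carrier, Y'.b a a' = X'.b a a')
    (hnew : ∀ r ∈ Y.carrier \ X.carrier, ∀ a ∈ Y.carrier, Y'.b r a = Y.b r a)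
    (hbase : ∀ k, ∀ a ∈ Y.carrier, Y'.b (Y.s k) a = Y.b (Y.s k) a) : ExtRelAt i X' Y' := by
  have hX : X'.carrier = X.carrier := by simp [carrier, hXG, hXI]
  have hY : Y'.carrier = Y.carrier := by simp [carrier, hYG, hYI]
  have hnew' : ∀ r ∈ Y.carrier, r ∉ X.carrier → ∀ a ∈ Y'.carrier, Y'.b r a = Y.b r a :=
    fun r hr hrX a ha => hnew r (Finset.mem_sdiff.2 ⟨hr, hrX⟩) a (hY ▸ ha)
  rw [← hX] at hb
  rcases extRelAt_cases h with ⟨rfl, j, g, hg, hs, hI, hGj, hG, -, hrow⟩ |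
    ⟨rfl, j, g, hg, hs, hI, hGj, hG, -, hrow⟩ |
    ⟨rfl, j, g₁, g₂, hne, hg₁, hg₂, hs, hI, hGj, hG, -, hrow⟩ |
    ⟨rfl, x₁, x₂, hne, hx₁, hx₂, hs, hG, hI, -, hrow⟩
  · have hgY : g ∈ Y.carrier := mem_carrier_of_mem_G (hGj ▸ Finset.mem_insert_self g _)
    refine ⟨j, g, hX ▸ hg, by rw [hYs, hXs, hs], by rw [hYI, hXI, hI], by rw [hYG, hXG, hGj],
      fun k hk => by rw [hYG, hXG, hG k hk], hb, fun a ha => ?_⟩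
    rw [hnew' g hgY hg a ha]
    exact hrow a (hY ▸ ha)
  · have hgY : g ∈ Y.carrier := mem_carrier_of_mem_G (hGj ▸ Finset.mem_insert_self g _)
    refine ⟨j, g, hX ▸ hg, by rw [hYs, hXs, hs], by rw [hYI, hXI, hI], by rw [hYG, hXG, hGj],
      fun k hk => by rw [hYG, hXG, hG k hk], hb, fun a ha => ?_⟩
    rw [hnew' g hgY hg a ha, hYs, hbase j a (hY ▸ ha)]
    exact hrow a (hY ▸ ha)
  · have hg₁Y : g₁ ∈ Y.carrier := mem_carrier_of_mem_G (hGj ▸ Finset.mem_insert_self g₁ _)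
    have hg₂Y : g₂ ∈ Y.carrier := mem_carrier_of_mem_G
      (hGj ▸ Finset.mem_insert_of_mem (Finset.mem_insert_self g₂ _))
    refine ⟨j, g₁, g₂, hne, hX ▸ hg₁, hX ▸ hg₂, by rw [hYs, hXs, hs], by rw [hYI, hXI, hI],
      by rw [hYG, hXG, hGj], fun k hk => by rw [hYG, hXG, hG k hk], hb, fun a ha => ?_⟩
    rw [hnew' g₁ hg₁Y hg₁ a ha, hnew' g₂ hg₂Y hg₂ a ha, hYs, hbase j a (hY ▸ ha)]
    exact hrow a (hY ▸ ha)
  · have hx₁Y : x₁ ∈ Y.carrier := mem_carrier_of_mem_I (hI ▸ Finset.mem_insert_self x₁ _)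
    have hx₂Y : x₂ ∈ Y.carrier := mem_carrier_of_mem_I
      (hI ▸ Finset.mem_insert_of_mem (Finset.mem_insert_self x₂ _))
    refine ⟨x₁, x₂, hne, hX ▸ hx₁, hX ▸ hx₂, by rw [hYs, hXs, hs], by rw [hYG, hXG, hG],
      by rw [hYI, hXI, hI], hb, fun a ha => ?_⟩
    rw [hnew' x₁ hx₁Y hx₁ a ha, hnew' x₂ hx₂Y hx₂ a ha]
    exact hrow a (hY ▸ ha)

/-- Moves that do not touch the elements added by an elementary extension can be made before
it. -/
theorem ExtRelAt.moves (h : ExtRelAt i X Y) {L : List (MoveDatum α n)}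
    (hL : ∀ m ∈ L, m.valid X) :
    ExtRelAt i (X.moves L hL) (Y.moves L fun m hm => (hL m hm).mono h.subframe) := by
  have hs : Y.s = X.s := h.subframe.s_eq.symm
  refine h.of_rows (moves_G _) (moves_I _) (moves_s _) (moves_G _) (moves_I _) (moves_s _)
    (fun a ha a' ha' => ?_) (fun r hr a _ => ?_) (fun k a _ => ?_)
  · simp only [moves_b, hs]
    exact applyMoves_eqOn hL h.b_eq a ha a' ha'
  · simp only [moves_b]
    exact applyMoves_row_of_not_touches (fun m hm => (hL m hm).not_touches_sdiff) hr a
  · simp only [moves_b]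
    exact applyMoves_base (fun m hm => (hL m hm).mono h.subframe) k a

/-- Moves that do not touch the elements removed by an inverse elementary extension can be made
after it. -/
theorem ExtRelAt.restrict (h : ExtRelAt i X Y) {Z : WovenBasedMatrix α H n} (hsub : X.Subframe Z)
    (hG : Z.G = Y.G) (hI : Z.I = Y.I) (hs : Z.s = Y.s) {L : List (MoveDatum α n)}
    (hL : ∀ m ∈ L, m.valid Z) (ht : ∀ m ∈ L, ¬ m.Touches (Y.carrier \ X.carrier))
    (hY : ∀ a ∈ Y.carrier, ∀ a' ∈ Y.carrier, Y.b a a' = applyMoves Z.s L Z.b a a') :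
    ExtRelAt i (Z.restrict hsub) Z := by
  refine h.of_rows rfl rfl rfl hG hI hs (fun _ _ _ _ => rfl) (fun r hr a ha => ?_)
    (fun k a ha => ?_)
  · rw [hY r (Finset.mem_sdiff.1 hr).1 a ha, applyMoves_row_of_not_touches ht hr]
  · rw [hY _ (mem_carrier_of_mem_G (Y.s_mem k)) a ha, ← hs, applyMoves_base hL]

theorem ExtRelAt.countP_le_two (h : ExtRelAt 4 X Y) {L : List (MoveDatum α n)}
    (hdisj : L.Pairwise MoveDatum.Disjoint) (hg : ∀ m ∈ L, m.g ∉ Y.I)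
    (ht : ∀ m ∈ L, m.Touches (Y.carrier \ X.carrier)) (a : α) :
    L.countP (fun m => decide (m.g = a)) ≤ 2 :=
  (countP_le_card_of_pairwise hdisj fun m hm hma => ⟨of_decide_eq_true hma,
    (ht m hm).resolve_left fun h' => hg m hm (h.sdiff_subset_I h')⟩).trans h.card_sdiff_le

end ExtRelAt

theorem List.perm_filter_not_append_filter_filter {β : Type*} (M : List β) (p q : β → Prop)
    [DecidablePred p] [DecidablePred q] :
    (M.filter (fun m => ¬ p m) ++
      ((M.filter (p ·)).filter (q ·) ++ (M.filter (p ·)).filter fun m => ¬ q m)).Perm M := by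
  have h₁ := List.filter_append_perm (fun m => decide (p m)) M
  have h₂ := List.filter_append_perm (fun m => decide (q m)) (M.filter (p ·))
  simp only [← decide_not] at h₁ h₂
  exact List.perm_append_comm.trans ((h₂.append_right _).trans h₁)

namespace WovenBasedMatrix

variable {X T T' : WovenBasedMatrix α H n}

/-- A reordering of the reduced form of `N`: first the moves inside `T`, last those inside `T'`. -/
theorem exists_three_phases (hT : T.Subframe X) (hT' : T'.Subframe X)
    {N : List (MoveDatum α n)} (hN : ∀ m ∈ N, m.valid X) (happ : movesApplicable X.s N X.b) :
    ∃ M₁ M₂ M₃ : List (MoveDatum α n),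
      (∀ m ∈ M₁, m.valid T) ∧ (∀ m ∈ M₂, m.valid X) ∧ (∀ m ∈ M₃, m.valid T') ∧
      ReducedMoves M₂ ∧ M₂.Pairwise MoveDatum.Disjoint ∧
      (∀ m ∈ M₂, m.Touches (X.carrier \ T.carrier) ∧ m.Touches (X.carrier \ T'.carrier)) ∧
      movesApplicable X.s (M₁ ++ (M₂ ++ M₃)) X.b ∧
      ∀ a ∈ X.carrier, ∀ a' ∈ X.carrier,
        applyMoves X.s (M₁ ++ (M₂ ++ M₃)) X.b a a' = applyMoves X.s N X.b a a' := by
  classical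
  obtain ⟨M, hMred, hM⟩ := X.exists_reduced_moves hN happ
  obtain ⟨hval, hdisj, happ, heff⟩ := hM _ (M.perm_filter_not_append_filter_filter
    (·.Touches (X.carrier \ T.carrier)) (·.Touches (X.carrier \ T'.carrier)))
  refine ⟨_, _, _, fun m hm => ?_, fun m hm => ?_, fun m hm => ?_, (hMred.filter _).filter _,
    hdisj.sublist ((List.sublist_append_left _ _).trans (List.sublist_append_right _ _)),
    fun m hm => ⟨?_, ?_⟩, happ, heff⟩
  · exact (hval m (List.mem_append_left _ hm)).of_not_touches hT
      (of_decide_eq_true (List.mem_filter.1 hm).2)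
  · exact hval m (List.mem_append_right _ (List.mem_append_left _ hm))
  · exact (hval m (List.mem_append_right _ (List.mem_append_right _ hm))).of_not_touches hT'
      (of_decide_eq_true (List.mem_filter.1 hm).2)
  · exact of_decide_eq_true (List.mem_filter.1 (List.mem_of_mem_filter hm)).2
  · exact of_decide_eq_true (List.mem_filter.1 hm).2

end WovenBasedMatrix

open WovenBasedMatrix

/-- a composition `M_j⁻¹ ∘ N ∘ M_i`, with `N` a finite sequence of
intersection moves, can be replaced by `N₃ ∘ M_j⁻¹ ∘ N₂ ∘ M_i ∘ N₁` with the same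
result, where `N₂` is reduced and every intersection move of `N₂` affects both an
element added by `M_i` and an element removed by `M_j⁻¹`; moreover if exactly one of
`i, j` equals `4`, then `N₂` has at most `2` moves acting on each non-intersection
element added (resp. removed), and if `i = j = 4` then `N₂` has at most two moves
acting on each element `g` of `G`. -/
theorem moves_between_extension_and_inverse
    {α : Type u} {H : Type v} [DecidableEq α] [AddCommGroup H] {n : ℕ}
    (T T1 Tm T2 : WovenBasedMatrix α H n) (i j : ℕ)
    (hi : ExtRelAt i T T1)
    (N : List (MoveDatum α n))
    (hNval : ∀ m ∈ N, m.valid T1) (hNapp : movesApplicable T1.s N T1.b)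
    (hTmG : Tm.G = T1.G) (hTmI : Tm.I = T1.I) (hTms : Tm.s = T1.s)
    (hTmb : ∀ a ∈ T1.carrier, ∀ a' ∈ T1.carrier,
      Tm.b a a' = applyMoves T1.s N T1.b a a')
    (hj : ExtRelAt j T2 Tm) :
    ∃ (N1 N2 N3 : List (MoveDatum α n)) (TA T1' TB TC : WovenBasedMatrix α H n),
      (∀ m ∈ N1, m.valid T) ∧ movesApplicable T.s N1 T.b ∧
      TA.G = T.G ∧ TA.I = T.I ∧ TA.s = T.s ∧
      (∀ a ∈ T.carrier, ∀ a' ∈ T.carrier, TA.b a a' = applyMoves T.s N1 T.b a a') ∧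
      ExtRelAt i TA T1' ∧
      (∀ m ∈ N2, m.valid T1') ∧ movesApplicable T1'.s N2 T1'.b ∧
      TB.G = T1'.G ∧ TB.I = T1'.I ∧ TB.s = T1'.s ∧
      (∀ a ∈ T1'.carrier, ∀ a' ∈ T1'.carrier,
        TB.b a a' = applyMoves T1'.s N2 T1'.b a a') ∧
      ExtRelAt j TC TB ∧
      (∀ m ∈ N3, m.valid TC) ∧ movesApplicable TC.s N3 TC.b ∧
      TC.G = T2.G ∧ TC.I = T2.I ∧ TC.s = T2.s ∧
      (∀ a ∈ T2.carrier, ∀ a' ∈ T2.carrier,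
        applyMoves TC.s N3 TC.b a a' = T2.b a a') ∧
      ReducedMoves N2 ∧
      (∀ m ∈ N2,
        (m.g ∈ T1'.carrier \ TA.carrier ∨ m.x1 ∈ T1'.carrier \ TA.carrier ∨
          m.x2 ∈ T1'.carrier \ TA.carrier) ∧
        (m.g ∈ TB.carrier \ TC.carrier ∨ m.x1 ∈ TB.carrier \ TC.carrier ∨
          m.x2 ∈ TB.carrier \ TC.carrier)) ∧
      (i ≠ 4 → j = 4 → ∀ a ∈ T1'.carrier \ TA.carrier,
        (N2.countP fun m => decide (m.g = a)) ≤ 2) ∧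
      (i = 4 → j ≠ 4 → ∀ a ∈ TB.carrier \ TC.carrier,
        (N2.countP fun m => decide (m.g = a)) ≤ 2) ∧
      (i = 4 → j = 4 → ∀ a : α, (N2.countP fun m => decide (m.g = a)) ≤ 2) := by
  have hT := hi.subframe
  have hcarm : Tm.carrier = T1.carrier := by simp [carrier, hTmG, hTmI]
  have hT2 : T2.Subframe T1 := by
    obtain ⟨hs, hG, hI⟩ := hj.subframe
    exact ⟨hs.trans hTms, hTmG ▸ hG, hTmI ▸ hI⟩
  obtain ⟨N1, N2, N3, hval₁, hval₂, hval₃, hred, hdisj₂, htouch, happ, heff⟩ :=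
    T1.exists_three_phases hT hT2 hNval hNapp
  simp only [movesApplicable_append, applyMoves_append] at happ heff
  set T1' := T1.moves N1 fun m hm => (hval₁ m hm).mono hT
  set TB := T1'.moves N2 fun m hm => (T1.valid_moves_iff _).2 (hval₂ m hm)
  have hTB : T2.Subframe TB := (hT2.moves _).moves _
  have hTm : ∀ a ∈ T1.carrier, ∀ a' ∈ T1.carrier, Tm.b a a' = applyMoves T1.s N3 TB.b a a' :=
    fun a ha a' ha' => by
      simp only [hTmb a ha a' ha', ← heff a ha a' ha', TB, T1', moves_b, moves_s]
  have hcount : i = 4 → ∀ a, (N2.countP fun m => decide (m.g = a)) ≤ 2 := by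
    rintro rfl
    exact hi.countP_le_two hdisj₂ (fun m hm => (hval₂ m hm).g_notMem_I) fun m hm =>
      (htouch m hm).1
  refine ⟨N1, N2, N3, T.moves N1 hval₁, T1', TB, TB.restrict hTB,
    hval₁, ?_, moves_G _, moves_I _, moves_s _, fun _ _ _ _ => by rw [moves_b], hi.moves hval₁,
    fun m hm => (T1.valid_moves_iff _).2 (hval₂ m hm), by simpa [T1'] using happ.2.1,
    moves_G _, moves_I _, moves_s _, fun _ _ _ _ => by rw [moves_b], ?_,
    hval₃, ?_, rfl, rfl, rfl, fun a ha a' ha' => ?_,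
    hred, by simpa only [TB, T1', moves_carrier, restrict_carrier] using htouch,
    ?_, fun hi₄ _ a _ => hcount hi₄ a, fun hi₄ _ => hcount hi₄⟩
  · rw [← movesApplicable_iff_of_eqOn hval₁ hi.b_eq, hT.s_eq]
    exact happ.1
  · refine hj.restrict hTB (by simp [TB, T1', hTmG]) (by simp [TB, T1', hTmI])
      (by simp [TB, T1', hTms]) (fun m hm => (hval₃ m hm).mono hTB)
      (fun m hm => (hval₃ m hm).not_touches_sdiff) fun a ha a' ha' => ?_
    rw [hcarm] at ha ha'
    rw [hTm a ha a' ha', moves_s, moves_s]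
  · simpa [TB, T1', hT2.s_eq] using happ.2.2
  · rw [restrict_s, restrict_b, hT2.s_eq, ← hTm a (hT2.carrier_subset ha) a'
      (hT2.carrier_subset ha'), hj.b_eq a ha a' ha']
  · rintro - rfl a -
    exact hj.countP_le_two hdisj₂ (fun m hm => hTmI ▸ (hval₂ m hm).g_notMem_I)
      (fun m hm => hcarm ▸ (htouch m hm).2) a
end

section
/- Every woven based matrix T over an abelian group H is homologous to a primitive woven based matrix T_•. -/
universe u v

variable {α : Type u} {H : Type v} [DecidableEq α] [AddCommGroup H] {n : ℕ}

/-! Each failure of primitivity exhibits, after some intersection moves (which keep the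
underlying set `G ∪ I`), an element or a pair that an inverse elementary extension removes.
This strictly shrinks `G ∪ I`, so induction on its size ends at a primitive matrix. -/

lemma Function.update_sdiff_le {ι β : Type*} [DecidableEq ι] [GeneralizedCoheytingAlgebra β]
    (f : ι → β) (i : ι) (b : β) : Function.update f i (f i \ b) ≤ f := by
  intro j
  rcases eq_or_ne j i with rfl | h <;> simp [*]

namespace WovenBasedMatrix

lemma biUnion_union_subset {G G' : Fin n → Finset α} {I I' : Finset α} (hG : G' ≤ G)
    (hI : I' ⊆ I) : Finset.univ.biUnion G' ∪ I' ⊆ Finset.univ.biUnion G ∪ I :=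
  Finset.union_subset_union (Finset.biUnion_mono fun j _ => hG j) hI

variable (T : WovenBasedMatrix α H n)

def eraseG (i : Fin n) (S : Finset α) (hs : T.s i ∉ S) : WovenBasedMatrix α H n where
  G := Function.update T.G i (T.G i \ S)
  I := T.I
  s := T.s
  b := T.b
  s_mem j := by
    rcases eq_or_ne j i with rfl | h
    · simpa using ⟨T.s_mem j, hs⟩
    · simpa [h] using T.s_mem j
  disjointG j k hjk := (T.disjointG j k hjk).mono
    (Function.update_sdiff_le T.G i S j) (Function.update_sdiff_le T.G i S k)
  disjointI j := (T.disjointI j).mono_left (Function.update_sdiff_le T.G i S j)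
  skew a ha a' ha' :=
    have hsub := biUnion_union_subset (Function.update_sdiff_le T.G i S) subset_rfl
    T.skew a (hsub ha) a' (hsub ha')
  diag a ha :=
    T.diag a (biUnion_union_subset (Function.update_sdiff_le T.G i S) subset_rfl ha)
  inter_zero := T.inter_zero
  weave_two := T.weave_two
  weave_val j g hg := T.weave_val j g (Function.update_sdiff_le T.G i S j hg)

def eraseI (S : Finset α) : WovenBasedMatrix α H n where
  G := T.G
  I := T.I \ S
  s := T.s
  b := T.b
  s_mem := T.s_mem
  disjointG := T.disjointG
  disjointI j := (T.disjointI j).mono_right Finset.sdiff_subset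
  skew a ha a' ha' :=
    have hsub := biUnion_union_subset le_rfl (Finset.sdiff_subset (s := T.I) (t := S))
    T.skew a (hsub ha) a' (hsub ha')
  diag a ha := T.diag a (biUnion_union_subset le_rfl Finset.sdiff_subset ha)
  inter_zero x hx y hy := T.inter_zero x (Finset.sdiff_subset hx) y (Finset.sdiff_subset hy)
  weave_two x hx := T.weave_two x (Finset.sdiff_subset hx)
  weave_val j g hg x hx := T.weave_val j g hg x (Finset.sdiff_subset hx)

variable {T}

lemma mem_carrier_of_mem_G_s16 {i : Fin n} {g : α} (hg : g ∈ T.G i) : g ∈ T.carrier :=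
  Finset.mem_union_left _ (Finset.mem_biUnion.2 ⟨i, Finset.mem_univ i, hg⟩)

lemma notMem_carrier_eraseG {i : Fin n} {S : Finset α} (hs : T.s i ∉ S) {g : α}
    (hgS : g ∈ S) (hgG : g ∈ T.G i) : g ∉ (T.eraseG i S hs).carrier := by
  simp only [carrier, eraseG, Finset.mem_union, Finset.mem_biUnion, Finset.mem_univ,
    true_and, not_or, not_exists]
  refine ⟨fun j hj => ?_, Finset.disjoint_left.1 (T.disjointI i) hgG⟩
  rcases eq_or_ne j i with rfl | hji
  · simp_all
  · rw [Function.update_of_ne hji] at hj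
    exact Finset.disjoint_left.1 (T.disjointG j i hji) hj hgG

lemma notMem_carrier_eraseI {S : Finset α} {x : α} (hxS : x ∈ S) (hxI : x ∈ T.I) :
    x ∉ (T.eraseI S).carrier := by
  simp only [carrier, eraseI, Finset.mem_union, Finset.mem_biUnion, Finset.mem_sdiff, not_or]
  exact ⟨fun ⟨j, _, hj⟩ => Finset.disjoint_right.1 (T.disjointI j) hxI hj, fun h => h.2 hxS⟩

lemma card_carrier_eraseG_lt {i : Fin n} {S : Finset α} (hs : T.s i ∉ S) {g : α}
    (hgS : g ∈ S) (hgG : g ∈ T.G i) :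
    (T.eraseG i S hs).carrier.card < T.carrier.card :=
  Finset.card_lt_card <| (Finset.ssubset_iff_of_subset
    (biUnion_union_subset (Function.update_sdiff_le T.G i S) subset_rfl)).2
    ⟨g, mem_carrier_of_mem_G_s16 hgG, notMem_carrier_eraseG hs hgS hgG⟩

lemma card_carrier_eraseI_lt {S : Finset α} {x : α} (hxS : x ∈ S) (hxI : x ∈ T.I) :
    (T.eraseI S).carrier.card < T.carrier.card :=
  Finset.card_lt_card <| (Finset.ssubset_iff_of_subset
    (biUnion_union_subset le_rfl Finset.sdiff_subset)).2
    ⟨x, Finset.mem_union_right _ hxI, notMem_carrier_eraseI hxS hxI⟩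

lemma eraseG_G_of_ne {i j : Fin n} (S : Finset α) (hs : T.s i ∉ S) (hji : j ≠ i) :
    (T.eraseG i S hs).G j = T.G j :=
  Function.update_of_ne hji _ _

lemma insert_eraseG_singleton {i : Fin n} {g : α} (hgG : g ∈ T.G i) (hs : T.s i ∉ {g}) :
    insert g ((T.eraseG i {g} hs).G i) = T.G i := by
  simp [eraseG, hgG]

lemma insert_insert_eraseG_pair {i : Fin n} {g₁ g₂ : α} (hg₁ : g₁ ∈ T.G i) (hg₂ : g₂ ∈ T.G i)
    (hs : T.s i ∉ {g₁, g₂}) :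
    insert g₁ (insert g₂ ((T.eraseG i {g₁, g₂} hs).G i)) = T.G i := by
  simp only [eraseG, Function.update_self]
  grind

end WovenBasedMatrix

open WovenBasedMatrix

section InverseExtension

variable {T : WovenBasedMatrix α H n}

lemma extRel1_eraseG {i : Fin n} {g : α} (hgG : g ∈ T.G i) (hgs : g ≠ T.s i)
    (hann : ∀ a ∈ T.carrier, T.b g a = 0) :
    ExtRel1 (T.eraseG i {g} (Finset.notMem_singleton.2 hgs.symm)) T :=
  ⟨i, g, notMem_carrier_eraseG _ (Finset.mem_singleton_self g) hgG, rfl, rfl,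
    (insert_eraseG_singleton hgG _).symm, fun _ hj => (eraseG_G_of_ne _ _ hj).symm,
    fun _ _ _ _ => rfl, hann⟩

lemma extRel2_eraseG {i : Fin n} {g : α} (hgG : g ∈ T.G i) (hgs : g ≠ T.s i)
    (hcore : ∀ a ∈ T.carrier, T.b g a = T.b (T.s i) a) :
    ExtRel2 (T.eraseG i {g} (Finset.notMem_singleton.2 hgs.symm)) T :=
  ⟨i, g, notMem_carrier_eraseG _ (Finset.mem_singleton_self g) hgG, rfl, rfl,
    (insert_eraseG_singleton hgG _).symm, fun _ hj => (eraseG_G_of_ne _ _ hj).symm,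
    fun _ _ _ _ => rfl, hcore⟩

lemma extRel3_eraseG {i : Fin n} {g₁ g₂ : α} (hg₁ : g₁ ∈ T.G i) (hg₂ : g₂ ∈ T.G i)
    (hs : T.s i ∉ {g₁, g₂}) (hg₁₂ : g₁ ≠ g₂)
    (hcompl : ∀ a ∈ T.carrier, T.b g₁ a + T.b g₂ a = T.b (T.s i) a) :
    ExtRel3 (T.eraseG i {g₁, g₂} hs) T :=
  ⟨i, g₁, g₂, hg₁₂, notMem_carrier_eraseG _ (by simp) hg₁,
    notMem_carrier_eraseG _ (by simp) hg₂, rfl, rfl,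
    (insert_insert_eraseG_pair hg₁ hg₂ hs).symm, fun _ hj => (eraseG_G_of_ne _ _ hj).symm,
    fun _ _ _ _ => rfl, hcompl⟩

lemma extRel4_eraseI {x₁ x₂ : α} (hx₁ : x₁ ∈ T.I) (hx₂ : x₂ ∈ T.I) (hx₁₂ : x₁ ≠ x₂)
    (hann : ∀ a ∈ T.carrier, T.b x₁ a + T.b x₂ a = 0) :
    ExtRel4 (T.eraseI {x₁, x₂}) T :=
  ⟨x₁, x₂, hx₁₂, notMem_carrier_eraseI (by simp) hx₁, notMem_carrier_eraseI (by simp) hx₂,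
    rfl, rfl, by simp only [eraseI]; grind, fun _ _ _ _ => rfl, hann⟩

lemma exists_extRel_card_lt_of_not_noInverseExtension (h : ¬ NoInverseExtension T) :
    ∃ T', ExtRel T' T ∧ T'.carrier.card < T.carrier.card := by
  simp only [NoInverseExtension, not_and_or] at h
  push Not at h
  rcases h with ⟨i, g, hgG, hgs, hann⟩ | ⟨i, g, hgG, hgs, hcore⟩ |
    ⟨i, g₁, hg₁, g₂, hg₂, hg₁s, hg₂s, hg₁₂, hcompl⟩ | ⟨x₁, hx₁, x₂, hx₂, hx₁₂, hann⟩
  · exact ⟨_, .inl (extRel1_eraseG hgG hgs hann),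
      card_carrier_eraseG_lt _ (Finset.mem_singleton_self g) hgG⟩
  · exact ⟨_, .inr (.inl (extRel2_eraseG hgG hgs hcore)),
      card_carrier_eraseG_lt _ (Finset.mem_singleton_self g) hgG⟩
  · have hs : T.s i ∉ ({g₁, g₂} : Finset α) := by
      simpa [eq_comm] using ⟨hg₁s, hg₂s⟩
    exact ⟨_, .inr (.inr (.inl (extRel3_eraseG hg₁ hg₂ hs hg₁₂ hcompl))),
      card_carrier_eraseG_lt hs (by simp) hg₁⟩
  · exact ⟨_, .inr (.inr (.inr (extRel4_eraseI hx₁ hx₂ hx₁₂ hann))),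
      card_carrier_eraseI_lt (by simp) hx₁⟩

end InverseExtension

section IntersectionMoves

variable {T T' : WovenBasedMatrix α H n}

lemma carrier_eq_of_iMoves (h : Relation.ReflTransGen IMoveRel T T') :
    T'.carrier = T.carrier := by
  induction h with
  | refl => rfl
  | tail _ hstep ih =>
    obtain ⟨_, _, _, hG, hI, _⟩ := hstep
    rw [← ih, carrier, carrier, hG, hI]

lemma homologous_of_iMoves (h : Relation.ReflTransGen IMoveRel T T') : Homologous T T' :=
  Relation.ReflTransGen.mono (fun _ _ hs => Or.inr (Or.inr (Or.inl hs))) _ _ h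

end IntersectionMoves

lemma exists_homologous_card_lt_of_not_primitive {T : WovenBasedMatrix α H n}
    (h : ¬ Primitive T) : ∃ T', Homologous T T' ∧ T'.carrier.card < T.carrier.card := by
  simp only [Primitive, not_forall, exists_prop] at h
  obtain ⟨T', hmoves, hT'⟩ := h
  obtain ⟨T'', hext, hlt⟩ := exists_extRel_card_lt_of_not_noInverseExtension hT'
  exact ⟨T'', (homologous_of_iMoves hmoves).tail (.inr (.inl hext)),
    carrier_eq_of_iMoves hmoves ▸ hlt⟩

/-- every woven based matrix is homologous to a primitive woven based
matrix. -/
theorem exists_primitive_homologous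
    {α : Type u} {H : Type v} [DecidableEq α] [AddCommGroup H] {n : ℕ}
    (T : WovenBasedMatrix α H n) :
    ∃ Tp : WovenBasedMatrix α H n, Homologous T Tp ∧ Primitive Tp := by
  induction hN : T.carrier.card using Nat.strong_induction_on generalizing T with
  | _ N ih =>
    by_cases hT : Primitive T
    · exact ⟨T, .refl, hT⟩
    obtain ⟨T', hTT', hlt⟩ := exists_homologous_card_lt_of_not_primitive hT
    obtain ⟨Tp, hT'Tp, hTp⟩ := ih _ (hN ▸ hlt) T' rfl
    exact ⟨Tp, hTT'.trans hT'Tp, hTp⟩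
end
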